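/- arXiv:1205.4549 — 10 statements merged into one kernel-verified Lean document; each statement's English description precedes it below -/
import Mathlib

section
/- Let a < b be real numbers and let f : [a,b] → ℝ be differentiable on (a,b) with f' integrable on [a,b], and suppose γ ≤ f'(t) ≤ Γ for all t ∈ [a,b]. Set S = (f(b) − f(a))/(b − a). Then for all x ∈ [a, (a+b)/2], |(f(x) + f(a+b−x))/2 − (1/(b−a)) ∫_a^b f(t) dt| ≤ [(b−a)/4 + |x − (3a+b)/4|] · (S − γ). -/
/-!
Subtracting `γ t` from `f` changes neither side of the inequality except for replacing `S` by
`S - γ`, so one may assume `f' ≥ 0`. Integrating by parts against the Peano kernel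
`t - a` on `[a, x]`, `t - (a + b)/2` on `[x, a + b - x]` and `t - b` on `[a + b - x, b]`
writes `(b - a)` times the left-hand side as `∫ kernel · f'`. The kernel is bounded by
`max (x - a) ((a + b)/2 - x) = (b - a)/4 + |x - (3a + b)/4|`, and `∫ f' = f b - f a`.
-/

open MeasureTheory Set intervalIntegral

structure HasIntegrableDerivOn (F F' : ℝ → ℝ) (u v : ℝ) : Prop where
  continuousOn : ContinuousOn F (Icc u v)
  hasDerivAt : ∀ t ∈ Ioo u v, HasDerivAt F (F' t) t
  integrable_deriv : IntervalIntegrable F' volume u v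

namespace HasIntegrableDerivOn

variable {F F' : ℝ → ℝ} {a b u v : ℝ}

theorem mono (hF : HasIntegrableDerivOn F F' a b) (hau : a ≤ u) (huv : u ≤ v) (hvb : v ≤ b) :
    HasIntegrableDerivOn F F' u v :=
  ⟨hF.continuousOn.mono (Icc_subset_Icc hau hvb),
    fun t ht ↦ hF.hasDerivAt t ⟨hau.trans_lt ht.1, ht.2.trans_le hvb⟩,
    hF.integrable_deriv.mono_set (uIcc_subset_uIcc (mem_uIcc_of_le hau (huv.trans hvb))
      (mem_uIcc_of_le (hau.trans huv) hvb))⟩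

theorem sub_const_mul (hF : HasIntegrableDerivOn F F' u v) (γ : ℝ) :
    HasIntegrableDerivOn (fun t ↦ F t - γ * t) (fun t ↦ F' t - γ) u v :=
  ⟨hF.continuousOn.sub (continuousOn_const.mul continuousOn_id),
    fun t ht ↦
      (hF.hasDerivAt t ht).sub (((hasDerivAt_id' t).const_mul γ).congr_deriv (mul_one γ)),
    hF.integrable_deriv.sub intervalIntegrable_const⟩

theorem intervalIntegrable (hF : HasIntegrableDerivOn F F' u v) (huv : u ≤ v) :
    IntervalIntegrable F volume u v :=
  (hF.continuousOn.mono (uIcc_of_le huv).subset).intervalIntegrable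

theorem integral_eq_sub (hF : HasIntegrableDerivOn F F' u v) (huv : u ≤ v) :
    ∫ t in u..v, F' t = F v - F u :=
  integral_eq_sub_of_hasDeriv_right_of_le huv hF.continuousOn
    (fun t ht ↦ (hF.hasDerivAt t ht).hasDerivWithinAt) hF.integrable_deriv

theorem integral_sub_mul_deriv (hF : HasIntegrableDerivOn F F' u v) (huv : u ≤ v) (c : ℝ) :
    ∫ t in u..v, (t - c) * F' t = (v - c) * F v - (u - c) * F u - ∫ t in u..v, F t := by
  have h := integral_mul_deriv_eq_deriv_mul_of_hasDerivAt (u := fun t ↦ t - c) (u' := fun _ ↦ 1)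
    (by fun_prop) (uIcc_of_le huv ▸ hF.continuousOn)
    (fun t _ ↦ (hasDerivAt_id t).sub_const c)
    (fun t ht ↦ hF.hasDerivAt t (by rwa [min_eq_left huv, max_eq_right huv] at ht))
    intervalIntegrable_const hF.integrable_deriv
  simpa using h

end HasIntegrableDerivOn

theorem abs_integral_mul_le_mul_integral {w g : ℝ → ℝ} {u v M : ℝ} (huv : u ≤ v)
    (hg : IntervalIntegrable g volume u v) (hg₀ : ∀ t ∈ Ioc u v, 0 ≤ g t)
    (hw : ∀ t ∈ Ioc u v, |w t| ≤ M) :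
    |∫ t in u..v, w t * g t| ≤ M * ∫ t in u..v, g t := by
  rw [← intervalIntegral.integral_const_mul, ← Real.norm_eq_abs]
  refine norm_integral_le_of_norm_le huv (ae_of_all _ fun t ht ↦ ?_) (hg.const_mul M)
  rw [Real.norm_eq_abs, abs_mul, abs_of_nonneg (hg₀ t ht)]
  exact mul_le_mul_of_nonneg_right (hw t ht) (hg₀ t ht)

noncomputable def companionDeviation (f : ℝ → ℝ) (a b x : ℝ) : ℝ :=
  (f x + f (a + b - x)) / 2 - (1 / (b - a)) * ∫ t in a..b, f t

theorem companionDeviation_sub_const_mul {f : ℝ → ℝ} {a b : ℝ} (hab : a ≠ b)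
    (hf : IntervalIntegrable f volume a b) (γ x : ℝ) :
    companionDeviation (fun t ↦ f t - γ * t) a b x = companionDeviation f a b x := by
  have hba : b - a ≠ 0 := sub_ne_zero.2 hab.symm
  simp only [companionDeviation]
  rw [intervalIntegral.integral_sub (g := fun t ↦ γ * t) hf
    ((continuous_const.mul continuous_id).intervalIntegrable _ _),
    intervalIntegral.integral_const_mul, integral_id]
  field_simp
  ring

section Peano

variable {F F' : ℝ → ℝ} {a b x : ℝ}

theorem mul_companionDeviation_eq (hab : a < b) (hF : HasIntegrableDerivOn F F' a b)
    (hx : x ∈ Icc a ((a + b) / 2)) :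
    (b - a) * companionDeviation F a b x =
      (∫ t in a..x, (t - a) * F' t) + (∫ t in x..a + b - x, (t - (a + b) / 2) * F' t) +
        ∫ t in a + b - x..b, (t - b) * F' t := by
  obtain ⟨hax, hxm⟩ := hx
  have hxy : x ≤ a + b - x := by linarith
  have hyb : a + b - x ≤ b := by linarith
  have hF₁ := hF.mono le_rfl hax (hxy.trans hyb)
  have hF₂ := hF.mono hax hxy hyb
  have hF₃ := hF.mono (hax.trans hxy) hyb le_rfl
  have hsplit : ∫ t in a..b, F t =
      (∫ t in a..x, F t) + (∫ t in x..a + b - x, F t) + ∫ t in a + b - x..b, F t := by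
    have hI₁ := hF₁.intervalIntegrable hax
    have hI₂ := hF₂.intervalIntegrable hxy
    rw [integral_add_adjacent_intervals hI₁ hI₂,
      integral_add_adjacent_intervals (hI₁.trans hI₂) (hF₃.intervalIntegrable hyb)]
  rw [hF₁.integral_sub_mul_deriv hax, hF₂.integral_sub_mul_deriv hxy,
    hF₃.integral_sub_mul_deriv hyb, companionDeviation, hsplit]
  field_simp [(sub_pos.2 hab).ne']
  ring

theorem abs_companionDeviation_le (hab : a < b) (hF : HasIntegrableDerivOn F F' a b)
    (hF'₀ : ∀ t ∈ Icc a b, 0 ≤ F' t) (hx : x ∈ Icc a ((a + b) / 2)) :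
    |companionDeviation F a b x| ≤
      ((b - a) / 4 + |x - (3 * a + b) / 4|) * ((F b - F a) / (b - a)) := by
  set M := (b - a) / 4 + |x - (3 * a + b) / 4| with hM
  obtain ⟨hax, hxm⟩ := hx
  have hxy : x ≤ a + b - x := by linarith
  have hyb : a + b - x ≤ b := by linarith
  have hM₁ : x - a ≤ M := by rw [hM]; linarith [le_abs_self (x - (3 * a + b) / 4)]
  have hM₂ : (a + b) / 2 - x ≤ M := by rw [hM]; linarith [neg_abs_le (x - (3 * a + b) / 4)]
  have hpiece {u v c : ℝ} (hau : a ≤ u) (huv : u ≤ v) (hvb : v ≤ b)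
      (hc : ∀ t ∈ Ioc u v, |t - c| ≤ M) :
      |∫ t in u..v, (t - c) * F' t| ≤ M * (F v - F u) := by
    have hFuv := hF.mono hau huv hvb
    rw [← hFuv.integral_eq_sub huv]
    exact abs_integral_mul_le_mul_integral huv hFuv.integrable_deriv
      (fun t ht ↦ hF'₀ t ⟨hau.trans ht.1.le, ht.2.trans hvb⟩) hc
  have key : |(b - a) * companionDeviation F a b x| ≤ M * (F b - F a) := by
    rw [mul_companionDeviation_eq hab hF ⟨hax, hxm⟩]
    calc _ ≤ |∫ t in a..x, (t - a) * F' t| + |∫ t in x..a + b - x, (t - (a + b) / 2) * F' t| +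
          |∫ t in a + b - x..b, (t - b) * F' t| := abs_add_three _ _ _
      _ ≤ M * (F x - F a) + M * (F (a + b - x) - F x) + M * (F b - F (a + b - x)) := by
        gcongr
        · exact hpiece le_rfl hax (hxy.trans hyb) fun t ht ↦
            abs_le.2 ⟨by linarith [ht.1], by linarith [ht.2]⟩
        · exact hpiece hax hxy hyb fun t ht ↦
            abs_le.2 ⟨by linarith [ht.1], by linarith [ht.2]⟩
        · exact hpiece (hax.trans hxy) hyb le_rfl fun t ht ↦
            abs_le.2 ⟨by linarith [ht.1], by linarith [ht.2]⟩
      _ = M * (F b - F a) := by ring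
  have hba : 0 < b - a := sub_pos.2 hab
  rw [abs_mul, abs_of_pos hba] at key
  rw [← mul_div_assoc, le_div_iff₀ hba, mul_comm]
  exact key

end Peano

/-- **Companion of Ostrowski's inequality, lower-bound version** (Theorem 2.1, inequality (2.1)).
If `f : [a,b] → ℝ` is continuous on `[a,b]`, differentiable on `(a,b)` with derivative `f'`
integrable on `[a,b]` and `γ ≤ f' ≤ Γ` on `[a,b]`, then with `S = (f b - f a)/(b - a)`,
for every `x ∈ [a, (a+b)/2]`,
`|(f x + f (a+b-x))/2 - (1/(b-a)) ∫_a^b f| ≤ ((b-a)/4 + |x - (3a+b)/4|) (S - γ)`. -/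
theorem companion_ostrowski_L1_lower
    (a b γ Γ : ℝ) (hab : a < b) (f f' : ℝ → ℝ)
    (hcont : ContinuousOn f (Set.Icc a b))
    (hderiv : ∀ t ∈ Set.Ioo a b, HasDerivAt f (f' t) t)
    (hint : IntervalIntegrable f' MeasureTheory.volume a b)
    (hbound : ∀ t ∈ Set.Icc a b, γ ≤ f' t ∧ f' t ≤ Γ)
    (S : ℝ) (hS : S = (f b - f a) / (b - a)) :
    ∀ x ∈ Set.Icc a ((a + b) / 2),
      |(f x + f (a + b - x)) / 2 - (1 / (b - a)) * ∫ t in a..b, f t|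
        ≤ ((b - a) / 4 + |x - (3 * a + b) / 4|) * (S - γ) := by
  intro x hx
  have hf : HasIntegrableDerivOn f f' a b := ⟨hcont, hderiv, hint⟩
  have hslope : (f b - γ * b - (f a - γ * a)) / (b - a) = S - γ := by
    rw [hS]
    field_simp [(sub_pos.2 hab).ne']
    ring
  have h := abs_companionDeviation_le hab (hf.sub_const_mul γ)
    (fun t ht ↦ sub_nonneg.2 (hbound t ht).1) hx
  rwa [companionDeviation_sub_const_mul hab.ne (hf.intervalIntegrable hab.le), hslope] at h
end

section
/- Let a < b be real numbers and let f : [a,b] → ℝ be differentiable on (a,b) with f' integrable on [a,b], and suppose γ ≤ f'(t) ≤ Γ for all t ∈ [a,b]. Set S = (f(b) − f(a))/(b − a). Then for all x ∈ [a, (a+b)/2], |(f(x) + f(a+b−x))/2 − (1/(b−a)) ∫_a^b f(t) dt| ≤ [(b−a)/4 + |x − (3a+b)/4|] · (Γ − S). -/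
/-!
Replacing `f` by `F t = Γ t - f t` only flips the sign of the quantity inside the absolute value
and turns `Γ - S` into the slope `(F b - F a) / (b - a)`; since `F' = Γ - f' ≥ 0`, `F` is
monotone, and for monotone `F` no derivative is needed. With `m = (a + b) / 2` and
`y = a + b - x`, split `[a, b]` at `x, m, y`: on each of the four pieces the integral of `F`
lies between the length of the piece times the values of `F` at its endpoints. Since
`(b - a) / 2 = (x - a) + (m - x) = (y - m) + (b - y)`, this bounds
`(b - a) (F x + F y) / 2 - ∫ F` above by `(x - a) (F x - F a) + (m - x) (F y - F m)` and below by
`-(m - x) (F m - F x) - (b - y) (F b - F y)`. All four lengths are at most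
`(b - a) / 4 + |x - (3a + b) / 4|`, and the increments of `F` are taken over disjoint intervals.
-/

open Set MeasureTheory intervalIntegral

theorem MonotoneOn.integral_mem_Icc {F : ℝ → ℝ} {c d : ℝ} (hF : MonotoneOn F (Icc c d))
    (hcd : c ≤ d) : ∫ t in c..d, F t ∈ Icc ((d - c) * F c) ((d - c) * F d) := by
  have hint : IntervalIntegrable F volume c d := (uIcc_of_le hcd ▸ hF).intervalIntegrable
  constructor
  · simpa [mul_comm] using integral_mono_on hcd intervalIntegrable_const hint
      fun t ht => hF (left_mem_Icc.2 hcd) ht ht.1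
  · simpa [mul_comm] using integral_mono_on hcd hint intervalIntegrable_const
      fun t ht => hF ht (right_mem_Icc.2 hcd) ht.2

theorem MonotoneOn.abs_half_length_mul_companion_sub_integral_le {F : ℝ → ℝ} {a b x : ℝ}
    (hF : MonotoneOn F (Icc a b)) (hax : a ≤ x) (hxm : x ≤ (a + b) / 2) :
    |(b - a) / 2 * (F x + F (a + b - x)) - ∫ t in a..b, F t|
      ≤ ((b - a) / 4 + |x - (3 * a + b) / 4|) * (F b - F a) := by
  set M := (b - a) / 4 + |x - (3 * a + b) / 4| with hM
  have hM₁ : x - a ≤ M := by linarith [hM, le_abs_self (x - (3 * a + b) / 4)]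
  have hM₂ : (a + b) / 2 - x ≤ M := by linarith [hM, neg_abs_le (x - (3 * a + b) / 4)]
  have mono {s t : ℝ} (has : a ≤ s) (hst : s ≤ t) (htb : t ≤ b) : F s ≤ F t :=
    hF ⟨has, hst.trans htb⟩ ⟨has.trans hst, htb⟩ hst
  have piece {c d : ℝ} (hac : a ≤ c) (hcd : c ≤ d) (hdb : d ≤ b) :=
    (hF.mono (Icc_subset_Icc hac hdb)).integral_mem_Icc hcd
  have integrable {c d : ℝ} (hac : a ≤ c) (hcd : c ≤ d) (hdb : d ≤ b) :
      IntervalIntegrable F volume c d :=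
    (uIcc_of_le hcd ▸ hF.mono (Icc_subset_Icc hac hdb)).intervalIntegrable
  have split : ∫ t in a..b, F t = (∫ t in a..x, F t) + (∫ t in x..(a + b) / 2, F t)
      + (∫ t in (a + b) / 2..a + b - x, F t) + ∫ t in a + b - x..b, F t := by
    rw [integral_add_adjacent_intervals (integrable le_rfl hax (by linarith))
        (integrable hax hxm (by linarith)),
      integral_add_adjacent_intervals (integrable le_rfl (by linarith) (by linarith))
        (integrable (by linarith) (by linarith) (by linarith)),
      integral_add_adjacent_intervals (integrable le_rfl (by linarith) (by linarith))
        (integrable (by linarith) (by linarith) le_rfl)]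
  obtain ⟨h₁, h₁'⟩ := piece le_rfl hax (by linarith)
  obtain ⟨h₂, h₂'⟩ := piece hax hxm (by linarith)
  obtain ⟨h₃, h₃'⟩ := piece (by linarith) (show (a + b) / 2 ≤ a + b - x by linarith)
    (by linarith)
  obtain ⟨h₄, h₄'⟩ := piece (by linarith) (show a + b - x ≤ b by linarith) le_rfl
  have hax' : F a ≤ F x := mono le_rfl hax (by linarith)
  have hxm' : F x ≤ F ((a + b) / 2) := mono hax hxm (by linarith)
  have hmy' : F ((a + b) / 2) ≤ F (a + b - x) := mono (by linarith) (by linarith) (by linarith)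
  have hyb' : F (a + b - x) ≤ F b := mono (by linarith) (by linarith) le_rfl
  have upper := add_le_add (mul_le_mul_of_nonneg_right hM₁ (sub_nonneg.2 hax'))
    (mul_le_mul_of_nonneg_right hM₂ (sub_nonneg.2 hmy'))
  have lower := add_le_add (mul_le_mul_of_nonneg_right hM₂ (sub_nonneg.2 hxm'))
    (mul_le_mul_of_nonneg_right hM₁ (sub_nonneg.2 hyb'))
  rw [split, abs_le]
  constructor <;> linarith

theorem MonotoneOn.abs_companion_ostrowski_le {F : ℝ → ℝ} {a b x : ℝ} (hab : a < b)
    (hF : MonotoneOn F (Icc a b)) (hax : a ≤ x) (hxm : x ≤ (a + b) / 2) :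
    |(F x + F (a + b - x)) / 2 - (1 / (b - a)) * ∫ t in a..b, F t|
      ≤ ((b - a) / 4 + |x - (3 * a + b) / 4|) * ((F b - F a) / (b - a)) := by
  have hba : 0 < b - a := sub_pos.2 hab
  calc |(F x + F (a + b - x)) / 2 - (1 / (b - a)) * ∫ t in a..b, F t|
      = |(b - a) / 2 * (F x + F (a + b - x)) - ∫ t in a..b, F t| / (b - a) := by
        rw [eq_div_iff hba.ne', ← abs_of_pos hba, ← abs_mul, abs_of_pos hba]
        congr 1
        field_simp
    _ ≤ ((b - a) / 4 + |x - (3 * a + b) / 4|) * (F b - F a) / (b - a) := by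
        gcongr
        exact hF.abs_half_length_mul_companion_sub_integral_le hax hxm
    _ = ((b - a) / 4 + |x - (3 * a + b) / 4|) * ((F b - F a) / (b - a)) := mul_div_assoc _ _ _

theorem companion_ostrowski_L1_upper_general
    (a b γ Γ : ℝ) (hab : a < b) (f f' : ℝ → ℝ)
    (hcont : ContinuousOn f (Set.Icc a b))
    (hderiv : ∀ t ∈ Set.Ioo a b, HasDerivAt f (f' t) t)
    (hbound : ∀ t ∈ Set.Icc a b, γ ≤ f' t ∧ f' t ≤ Γ)
    (S : ℝ) (hS : S = (f b - f a) / (b - a)) :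
    ∀ x ∈ Set.Icc a ((a + b) / 2),
      |(f x + f (a + b - x)) / 2 - (1 / (b - a)) * ∫ t in a..b, f t|
        ≤ ((b - a) / 4 + |x - (3 * a + b) / 4|) * (Γ - S) := by
  rintro x ⟨hax, hxm⟩
  have hba : b - a ≠ 0 := (sub_pos.2 hab).ne'
  set F : ℝ → ℝ := fun t => Γ * t - f t with hF
  have hmono : MonotoneOn F (Icc a b) := by
    refine monotoneOn_of_hasDerivWithinAt_nonneg (convex_Icc a b)
      ((continuousOn_const.mul continuousOn_id).sub hcont) (f' := fun t => Γ - f' t) ?_ ?_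
    all_goals rw [interior_Icc]
    · exact fun t ht => (((hasDerivAt_id t).const_mul Γ).sub (hderiv t ht)).hasDerivWithinAt
        |>.congr_deriv (by rw [mul_one])
    · exact fun t ht => sub_nonneg.2 (hbound t (Ioo_subset_Icc_self ht)).2
  have hintegral : ∫ t in a..b, F t = Γ * ((b ^ 2 - a ^ 2) / 2) - ∫ t in a..b, f t := by
    rw [hF, integral_sub (intervalIntegrable_id.const_mul Γ)
      (hcont.intervalIntegrable_of_Icc hab.le), intervalIntegral.integral_const_mul, integral_id]
  have hslope : (F b - F a) / (b - a) = Γ - S := by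
    rw [hS, hF]
    field_simp
    ring
  calc |(f x + f (a + b - x)) / 2 - (1 / (b - a)) * ∫ t in a..b, f t|
      = |(F x + F (a + b - x)) / 2 - (1 / (b - a)) * ∫ t in a..b, F t| := by
        rw [hintegral, ← abs_neg, hF]
        congr 1
        field_simp
        ring
    _ ≤ _ := hslope ▸ hmono.abs_companion_ostrowski_le hab hax hxm

/-- **Companion of Ostrowski's inequality, upper-bound version** (Theorem 2.1, inequality (2.2)).
If `f : [a,b] → ℝ` is continuous on `[a,b]`, differentiable on `(a,b)` with derivative `f'`
integrable on `[a,b]` and `γ ≤ f' ≤ Γ` on `[a,b]`, then with `S = (f b - f a)/(b - a)`,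
for every `x ∈ [a, (a+b)/2]`,
`|(f x + f (a+b-x))/2 - (1/(b-a)) ∫_a^b f| ≤ ((b-a)/4 + |x - (3a+b)/4|) (Γ - S)`. -/
theorem companion_ostrowski_L1_upper
    (a b γ Γ : ℝ) (hab : a < b) (f f' : ℝ → ℝ)
    (hcont : ContinuousOn f (Set.Icc a b))
    (hderiv : ∀ t ∈ Set.Ioo a b, HasDerivAt f (f' t) t)
    (hint : IntervalIntegrable f' MeasureTheory.volume a b)
    (hbound : ∀ t ∈ Set.Icc a b, γ ≤ f' t ∧ f' t ≤ Γ)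
    (S : ℝ) (hS : S = (f b - f a) / (b - a)) :
    ∀ x ∈ Set.Icc a ((a + b) / 2),
      |(f x + f (a + b - x)) / 2 - (1 / (b - a)) * ∫ t in a..b, f t|
        ≤ ((b - a) / 4 + |x - (3 * a + b) / 4|) * (Γ - S) :=
  companion_ostrowski_L1_upper_general a b γ Γ hab f f' hcont hderiv hbound S hS
end

section
/- Let a < b be real numbers and let f : [a,b] → ℝ be differentiable on (a,b) with f' integrable on [a,b], and suppose γ ≤ f'(t) ≤ Γ for all t ∈ [a,b]. Set S = (f(b) − f(a))/(b − a). Then |(f((3a+b)/4) + f((a+3b)/4))/2 − (1/(b−a)) ∫_a^b f(t) dt| ≤ ((b−a)/4)(S − γ) and |(f((3a+b)/4) + f((a+3b)/4))/2 − (1/(b−a)) ∫_a^b f(t) dt| ≤ ((b−a)/4)(Γ − S). -/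
/-!
Let `x₁ = (3a+b)/4`, `x₂ = (a+3b)/4`, `m = (a+b)/2` and let `p` be the Peano kernel equal to
`t - a` on `[a, x₁]`, `t - m` on `[x₁, x₂]` and `t - b` on `[x₂, b]`. Integrating by parts on
each piece gives `∫ p f' = (b-a)(f x₁ + f x₂)/2 - ∫ f`, and `∫ p = 0`, so `f'` may be replaced
by the nonnegative function `f' - γ`. Since `|p| ≤ (b-a)/4`, the error is at most
`(b-a)/4 · ∫ (f' - γ) = (b-a)/4 · (f b - f a - γ (b-a))`. The bound with `Γ` is the bound
with `γ` applied to `-f`.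
-/

open MeasureTheory intervalIntegral Set

theorem integral_sub_const_mul_deriv {f f' : ℝ → ℝ} {c d : ℝ} (e : ℝ) (hcd : c ≤ d)
    (hcont : ContinuousOn f (Icc c d)) (hderiv : ∀ t ∈ Ioo c d, HasDerivAt f (f' t) t)
    (hint : IntervalIntegrable f' volume c d) :
    ∫ t in c..d, (t - e) * f' t = (d - e) * f d - (c - e) * f c - ∫ t in c..d, f t := by
  have hfi : IntervalIntegrable f volume c d := hcont.intervalIntegrable_of_Icc hcd
  have hgi : IntervalIntegrable (fun t => (t - e) * f' t) volume c d :=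
    hint.continuousOn_mul (by fun_prop)
  have hprod : ∀ t ∈ Ioo c d, HasDerivAt (fun t => (t - e) * f t) (f t + (t - e) * f' t) t :=
    fun t ht => by
      have h : HasDerivAt (fun t => (t - e) * f t) (1 * f t + (t - e) * f' t) t :=
        ((hasDerivAt_id t).sub_const e).mul (hderiv t ht)
      rwa [one_mul] at h
  have hprod_cont : ContinuousOn (fun t => (t - e) * f t) (Icc c d) :=
    (continuous_sub_right e).continuousOn.mul hcont
  have hftc := integral_eq_sub_of_hasDerivAt_of_le hcd hprod_cont hprod (hfi.add hgi)
  rw [integral_add hfi hgi] at hftc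
  linarith

theorem abs_integral_mul_le_of_abs_le_of_nonneg {g h : ℝ → ℝ} {c d M : ℝ} (hcd : c ≤ d)
    (hgh : IntervalIntegrable (fun t => g t * h t) volume c d)
    (hh : IntervalIntegrable h volume c d)
    (hg_le : ∀ t ∈ Icc c d, |g t| ≤ M) (hh_nonneg : ∀ t ∈ Icc c d, 0 ≤ h t) :
    |∫ t in c..d, g t * h t| ≤ M * ∫ t in c..d, h t := by
  calc |∫ t in c..d, g t * h t| ≤ ∫ t in c..d, |g t * h t| :=
        abs_integral_le_integral_abs hcd
    _ ≤ ∫ t in c..d, M * h t := by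
        refine integral_mono_on hcd hgh.abs (hh.const_mul M) fun t ht => ?_
        rw [abs_mul, abs_of_nonneg (hh_nonneg t ht)]
        exact mul_le_mul_of_nonneg_right (hg_le t ht) (hh_nonneg t ht)
    _ = M * ∫ t in c..d, h t := integral_const_mul M h

/-- The quantity inside the absolute value is `∫ t in c..d, (t - e) * (f' t - γ)`. -/
theorem abs_linear_kernel_remainder_le {f f' : ℝ → ℝ} {c d e γ M : ℝ} (hcd : c ≤ d)
    (hcont : ContinuousOn f (Icc c d)) (hderiv : ∀ t ∈ Ioo c d, HasDerivAt f (f' t) t)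
    (hint : IntervalIntegrable f' volume c d) (hγ : ∀ t ∈ Icc c d, γ ≤ f' t)
    (hM : ∀ t ∈ Icc c d, |t - e| ≤ M) :
    |(d - e) * f d - (c - e) * f c - (∫ t in c..d, f t) - γ * ((d - e) ^ 2 - (c - e) ^ 2) / 2|
      ≤ M * (f d - f c - γ * (d - c)) := by
  have hshift : IntervalIntegrable (fun t => f' t - γ) volume c d :=
    hint.sub intervalIntegrable_const
  have hkernel : IntervalIntegrable (fun t => (t - e) * (f' t - γ)) volume c d :=
    hshift.continuousOn_mul (by fun_prop)
  have hlin : ∫ t in c..d, (t - e) = ((d - e) ^ 2 - (c - e) ^ 2) / 2 := by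
    simp only [integral_sub intervalIntegrable_id intervalIntegrable_const, integral_id,
      intervalIntegral.integral_const, smul_eq_mul]
    ring
  have hremainder : ∫ t in c..d, (t - e) * (f' t - γ)
      = (d - e) * f d - (c - e) * f c - (∫ t in c..d, f t)
        - γ * ((d - e) ^ 2 - (c - e) ^ 2) / 2 := by
    simp only [mul_sub]
    rw [integral_sub (hint.continuousOn_mul (by fun_prop))
        (Continuous.intervalIntegrable (by fun_prop) c d),
      integral_sub_const_mul_deriv e hcd hcont hderiv hint, intervalIntegral.integral_mul_const,
      hlin]
    ring
  have hftc : ∫ t in c..d, (f' t - γ) = f d - f c - γ * (d - c) := by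
    rw [integral_sub hint intervalIntegrable_const,
      integral_eq_sub_of_hasDerivAt_of_le hcd hcont hderiv hint]
    simp [mul_comm]
  rw [← hremainder, ← hftc]
  exact abs_integral_mul_le_of_abs_le_of_nonneg hcd hkernel hshift hM
    fun t ht => sub_nonneg.2 (hγ t ht)

theorem abs_quarter_points_trapezoid_sub_average_le {f f' : ℝ → ℝ} {a b γ : ℝ} (hab : a < b)
    (hcont : ContinuousOn f (Icc a b)) (hderiv : ∀ t ∈ Ioo a b, HasDerivAt f (f' t) t)
    (hint : IntervalIntegrable f' volume a b) (hγ : ∀ t ∈ Icc a b, γ ≤ f' t) :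
    |(f ((3 * a + b) / 4) + f ((a + 3 * b) / 4)) / 2 - (1 / (b - a)) * ∫ t in a..b, f t|
      ≤ ((b - a) / 4) * ((f b - f a) / (b - a) - γ) := by
  have piece : ∀ c d e, a ≤ c → c ≤ d → d ≤ b → (∀ t ∈ Icc c d, |t - e| ≤ (b - a) / 4) →
      |(d - e) * f d - (c - e) * f c - (∫ t in c..d, f t) - γ * ((d - e) ^ 2 - (c - e) ^ 2) / 2|
        ≤ (b - a) / 4 * (f d - f c - γ * (d - c)) := fun c d e hac hcd hdb hM =>
    abs_linear_kernel_remainder_le hcd (hcont.mono (Icc_subset_Icc hac hdb))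
      (fun t ht => hderiv t (Ioo_subset_Ioo hac hdb ht))
      (hint.mono_set (uIcc_subset_uIcc (mem_uIcc_of_le hac (hcd.trans hdb))
        (mem_uIcc_of_le (hac.trans hcd) hdb)))
      (fun t ht => hγ t (Icc_subset_Icc hac hdb ht)) hM
  have h₁ := piece a ((3 * a + b) / 4) a le_rfl (by linarith) (by linarith)
    fun t ht => by rw [abs_le]; constructor <;> linarith [ht.1, ht.2]
  have h₂ := piece ((3 * a + b) / 4) ((a + 3 * b) / 4) ((a + b) / 2) (by linarith)
    (by linarith) (by linarith) fun t ht => by rw [abs_le]; constructor <;> linarith [ht.1, ht.2]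
  have h₃ := piece ((a + 3 * b) / 4) b b (by linarith) (by linarith) le_rfl
    fun t ht => by rw [abs_le]; constructor <;> linarith [ht.1, ht.2]
  have hfi : IntervalIntegrable f volume a b := hcont.intervalIntegrable_of_Icc hab.le
  have hsplit : ∫ t in a..b, f t = (∫ t in a..(3 * a + b) / 4, f t)
      + (∫ t in (3 * a + b) / 4..(a + 3 * b) / 4, f t) + ∫ t in (a + 3 * b) / 4..b, f t := by
    rw [integral_add_adjacent_intervals, integral_add_adjacent_intervals] <;>
      exact hfi.mono_set (uIcc_subset_uIcc (mem_uIcc_of_le (by linarith) (by linarith))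
        (mem_uIcc_of_le (by linarith) (by linarith)))
  have hpos : 0 < b - a := sub_pos.2 hab
  have hscaled : |(b - a) * ((f ((3 * a + b) / 4) + f ((a + 3 * b) / 4)) / 2) - ∫ t in a..b, f t|
      ≤ (b - a) / 4 * (f b - f a - γ * (b - a)) := by
    rw [abs_le] at h₁ h₂ h₃ ⊢
    constructor <;> linarith [h₁.1, h₁.2, h₂.1, h₂.2, h₃.1, h₃.2]
  rw [show (f ((3 * a + b) / 4) + f ((a + 3 * b) / 4)) / 2 - 1 / (b - a) * ∫ t in a..b, f t
      = ((b - a) * ((f ((3 * a + b) / 4) + f ((a + 3 * b) / 4)) / 2) - ∫ t in a..b, f t)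
        / (b - a) by field_simp,
    show (b - a) / 4 * ((f b - f a) / (b - a) - γ) = (b - a) / 4 * (f b - f a - γ * (b - a))
        / (b - a) by field_simp,
    abs_div, abs_of_pos hpos]
  exact div_le_div_of_nonneg_right hscaled hpos.le

/-- **Trapezoid type inequalities at `x = (3a+b)/4`** (Corollary of Theorem 2.1,
inequalities (2.13) and (2.14)). -/
theorem companion_ostrowski_L1_trapezoid_type
    (a b γ Γ : ℝ) (hab : a < b) (f f' : ℝ → ℝ)
    (hcont : ContinuousOn f (Set.Icc a b))
    (hderiv : ∀ t ∈ Set.Ioo a b, HasDerivAt f (f' t) t)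
    (hint : IntervalIntegrable f' MeasureTheory.volume a b)
    (hbound : ∀ t ∈ Set.Icc a b, γ ≤ f' t ∧ f' t ≤ Γ)
    (S : ℝ) (hS : S = (f b - f a) / (b - a)) :
    |(f ((3 * a + b) / 4) + f ((a + 3 * b) / 4)) / 2 - (1 / (b - a)) * ∫ t in a..b, f t|
        ≤ ((b - a) / 4) * (S - γ) ∧
    |(f ((3 * a + b) / 4) + f ((a + 3 * b) / 4)) / 2 - (1 / (b - a)) * ∫ t in a..b, f t|
        ≤ ((b - a) / 4) * (Γ - S) := by
  refine ⟨hS ▸ abs_quarter_points_trapezoid_sub_average_le hab hcont hderiv hint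
    fun t ht => (hbound t ht).1, ?_⟩
  have hneg := abs_quarter_points_trapezoid_sub_average_le (f := fun t => -f t)
    (f' := fun t => -f' t) (γ := -Γ) hab hcont.neg (fun t ht => (hderiv t ht).neg) hint.neg
    fun t ht => neg_le_neg (hbound t ht).2
  rw [intervalIntegral.integral_neg] at hneg
  rw [← abs_neg, hS]
  convert hneg using 2 <;> ring
end

section
/- Let a < b be real numbers and let f : [a,b] → ℝ be differentiable on (a,b) with f' integrable on [a,b], and suppose γ ≤ f'(t) ≤ Γ for all t ∈ [a,b]. Set S = (f(b) − f(a))/(b − a). Then |(f(a) + f(b))/2 − (1/(b−a)) ∫_a^b f(t) dt| ≤ ((b−a)/2)(S − γ) and |(f(a) + f(b))/2 − (1/(b−a)) ∫_a^b f(t) dt| ≤ ((b−a)/2)(Γ − S). -/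
/-!
Write `p t = t - (a + b) / 2`. Integrating `p * f'` by parts expresses the trapezoid error
`(b - a) / 2 * (f a + f b) - ∫ f` as `∫ p * f'`. Since `∫ p = 0`, this equals `∫ p * (f' - γ)`,
and `|p| ≤ (b - a) / 2` together with `f' - γ ≥ 0` bounds it by `(b - a) / 2 * ∫ (f' - γ)`,
which the fundamental theorem of calculus evaluates to `(b - a) / 2 * (f b - f a - γ (b - a))`.
The bound through `Γ` is the bound through `γ` applied to `-f`.
-/

open intervalIntegral MeasureTheory Set

theorem abs_integral_mul_le_mul_integral_of_abs_le_of_nonneg {a b M : ℝ} {p g : ℝ → ℝ}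
    (hab : a ≤ b) (hg : IntervalIntegrable g volume a b)
    (hpg : IntervalIntegrable (fun t => p t * g t) volume a b)
    (hp : ∀ t ∈ Icc a b, |p t| ≤ M) (hg₀ : ∀ t ∈ Icc a b, 0 ≤ g t) :
    |∫ t in a..b, p t * g t| ≤ M * ∫ t in a..b, g t := by
  calc |∫ t in a..b, p t * g t| ≤ ∫ t in a..b, |p t * g t| := abs_integral_le_integral_abs hab
    _ ≤ ∫ t in a..b, M * g t := by
        refine integral_mono_on hab hpg.abs (hg.const_mul M) fun t ht => ?_
        rw [abs_mul, abs_of_nonneg (hg₀ t ht)]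
        exact mul_le_mul_of_nonneg_right (hp t ht) (hg₀ t ht)
    _ = M * ∫ t in a..b, g t := integral_const_mul M g

section Trapezoid

variable {a b : ℝ} {f f' : ℝ → ℝ}

theorem integral_sub_midpoint : ∫ t in a..b, (t - (a + b) / 2) = 0 := by
  rw [integral_comp_sub_right (fun t => t), integral_id]
  ring

theorem abs_sub_midpoint_le (t : ℝ) (ht : t ∈ Icc a b) : |t - (a + b) / 2| ≤ (b - a) / 2 := by
  rw [abs_le]
  constructor <;> linarith [ht.1, ht.2]

theorem integral_sub_midpoint_mul_deriv (hab : a ≤ b) (hcont : ContinuousOn f (Icc a b))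
    (hderiv : ∀ t ∈ Ioo a b, HasDerivAt f (f' t) t) (hint : IntervalIntegrable f' volume a b) :
    ∫ t in a..b, (t - (a + b) / 2) * f' t = (b - a) / 2 * (f a + f b) - ∫ t in a..b, f t := by
  rw [integral_mul_deriv_eq_deriv_mul_of_hasDerivAt (u := fun t => t - (a + b) / 2)
    (u' := fun _ => 1) (by fun_prop)
    (by rwa [uIcc_of_le hab]) (fun t _ => (hasDerivAt_id t).sub_const _)
    (by rwa [min_eq_left hab, max_eq_right hab]) intervalIntegrable_const hint]
  simp only [one_mul]
  ring

theorem abs_trapezoid_error_le_of_le_deriv {γ : ℝ} (hab : a ≤ b)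
    (hcont : ContinuousOn f (Icc a b)) (hderiv : ∀ t ∈ Ioo a b, HasDerivAt f (f' t) t)
    (hint : IntervalIntegrable f' volume a b) (hγ : ∀ t ∈ Icc a b, γ ≤ f' t) :
    |(b - a) / 2 * (f a + f b) - ∫ t in a..b, f t| ≤ (b - a) / 2 * (f b - f a - γ * (b - a)) := by
  have hp : IntervalIntegrable (fun t => t - (a + b) / 2) volume a b :=
    intervalIntegrable_id.sub intervalIntegrable_const
  have hg : IntervalIntegrable (fun t => f' t - γ) volume a b := hint.sub intervalIntegrable_const
  have hshift : ∫ t in a..b, (t - (a + b) / 2) * f' t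
      = ∫ t in a..b, (t - (a + b) / 2) * (f' t - γ) := by
    simp_rw [mul_sub]
    rw [integral_sub (hint.continuousOn_mul (by fun_prop)) (hp.mul_const γ),
      intervalIntegral.integral_mul_const, integral_sub_midpoint, zero_mul, sub_zero]
  have hftc : ∫ t in a..b, (f' t - γ) = f b - f a - γ * (b - a) := by
    rw [integral_sub hint intervalIntegrable_const,
      integral_eq_sub_of_hasDerivAt_of_le hab hcont hderiv hint, intervalIntegral.integral_const,
      smul_eq_mul, mul_comm]
  rw [← integral_sub_midpoint_mul_deriv hab hcont hderiv hint, hshift, ← hftc]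
  exact abs_integral_mul_le_mul_integral_of_abs_le_of_nonneg hab hg
    (hg.continuousOn_mul (by fun_prop)) abs_sub_midpoint_le fun t ht => sub_nonneg.2 (hγ t ht)

theorem abs_trapezoid_error_le_of_deriv_le {Γ : ℝ} (hab : a ≤ b)
    (hcont : ContinuousOn f (Icc a b)) (hderiv : ∀ t ∈ Ioo a b, HasDerivAt f (f' t) t)
    (hint : IntervalIntegrable f' volume a b) (hΓ : ∀ t ∈ Icc a b, f' t ≤ Γ) :
    |(b - a) / 2 * (f a + f b) - ∫ t in a..b, f t| ≤ (b - a) / 2 * (Γ * (b - a) - (f b - f a)) := by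
  have hneg := abs_trapezoid_error_le_of_le_deriv (f := -f) (f' := -f') (γ := -Γ) hab hcont.neg
    (fun t ht => (hderiv t ht).neg) hint.neg fun t ht => neg_le_neg (hΓ t ht)
  simp only [Pi.neg_apply, intervalIntegral.integral_neg] at hneg
  calc |(b - a) / 2 * (f a + f b) - ∫ t in a..b, f t|
      = |(b - a) / 2 * (-f a + -f b) - -∫ t in a..b, f t| := by rw [← abs_neg]; congr 1; ring
    _ ≤ (b - a) / 2 * (-f b - -f a - -Γ * (b - a)) := hneg
    _ = (b - a) / 2 * (Γ * (b - a) - (f b - f a)) := by ring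

end Trapezoid

/-- **Trapezoid inequalities** (Corollary of Theorem 2.1, inequalities (2.15) and (2.16)). -/
theorem companion_ostrowski_L1_trapezoid
    (a b γ Γ : ℝ) (hab : a < b) (f f' : ℝ → ℝ)
    (hcont : ContinuousOn f (Set.Icc a b))
    (hderiv : ∀ t ∈ Set.Ioo a b, HasDerivAt f (f' t) t)
    (hint : IntervalIntegrable f' MeasureTheory.volume a b)
    (hbound : ∀ t ∈ Set.Icc a b, γ ≤ f' t ∧ f' t ≤ Γ)
    (S : ℝ) (hS : S = (f b - f a) / (b - a)) :
    |(f a + f b) / 2 - (1 / (b - a)) * ∫ t in a..b, f t| ≤ ((b - a) / 2) * (S - γ) ∧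
    |(f a + f b) / 2 - (1 / (b - a)) * ∫ t in a..b, f t| ≤ ((b - a) / 2) * (Γ - S) := by
  have hba : 0 < b - a := sub_pos.2 hab
  have hslope : f b - f a = S * (b - a) := by rw [hS, div_mul_cancel₀ _ hba.ne']
  have herror : (f a + f b) / 2 - (1 / (b - a)) * ∫ t in a..b, f t
      = ((b - a) / 2 * (f a + f b) - ∫ t in a..b, f t) / (b - a) := by
    field_simp
  rw [herror, abs_div, abs_of_pos hba, div_le_iff₀ hba, div_le_iff₀ hba]
  exact ⟨(abs_trapezoid_error_le_of_le_deriv hab.le hcont hderiv hint fun t ht =>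
      (hbound t ht).1).trans_eq (by linear_combination (b - a) / 2 * hslope),
    (abs_trapezoid_error_le_of_deriv_le hab.le hcont hderiv hint fun t ht =>
      (hbound t ht).2).trans_eq (by linear_combination -(b - a) / 2 * hslope)⟩
end

section
/- Let a < b be real numbers and let f : [a,b] → ℝ be differentiable on (a,b) with f' integrable on [a,b], and suppose γ ≤ f'(t) ≤ Γ for all t ∈ [a,b]. Set S = (f(b) − f(a))/(b − a). Then |f((a+b)/2) − (1/(b−a)) ∫_a^b f(t) dt| ≤ ((b−a)/2)(S − γ) and |f((a+b)/2) − (1/(b−a)) ∫_a^b f(t) dt| ≤ ((b−a)/2)(Γ − S). -/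
/-!
Subtracting the line of slope `γ` from `f` leaves `g t = f t - γ t`, which is nondecreasing
because `f' ≥ γ`, and this does not change the midpoint defect `f m - (average of f)`.
For a nondecreasing `g`, the averages of `g` over the two halves of `[a, b]` lie in
`[g a, g m]` and `[g m, g b]`, so the defect of `g` is at most half the increment
`g b - g a = (b - a) (S - γ)`. The bound with `Γ` is the same argument applied to `-f`.
-/

open MeasureTheory Set

namespace MonotoneOn

variable {g : ℝ → ℝ} {a b : ℝ}

theorem intervalIntegrable_of_le (hab : a ≤ b) (hg : MonotoneOn g (Icc a b)) :
    IntervalIntegrable g volume a b :=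
  (uIcc_of_le hab ▸ hg).intervalIntegrable

theorem mul_le_intervalIntegral (hab : a ≤ b) (hg : MonotoneOn g (Icc a b)) :
    (b - a) * g a ≤ ∫ t in a..b, g t := by
  simpa [mul_comm] using intervalIntegral.integral_mono_on hab intervalIntegrable_const
    (hg.intervalIntegrable_of_le hab)
    fun t ht => hg (left_mem_Icc.2 hab) ht ht.1

theorem intervalIntegral_le_mul (hab : a ≤ b) (hg : MonotoneOn g (Icc a b)) :
    ∫ t in a..b, g t ≤ (b - a) * g b := by
  simpa [mul_comm] using intervalIntegral.integral_mono_on hab (hg.intervalIntegrable_of_le hab)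
    intervalIntegrable_const
    fun t ht => hg ht (right_mem_Icc.2 hab) ht.2

theorem abs_mul_midpoint_sub_intervalIntegral_le (hab : a ≤ b) (hg : MonotoneOn g (Icc a b)) :
    |(b - a) * g ((a + b) / 2) - ∫ t in a..b, g t| ≤ (b - a) / 2 * (g b - g a) := by
  set m := (a + b) / 2 with hm
  have ham : a ≤ m := by linarith
  have hmb : m ≤ b := by linarith
  have hleft : MonotoneOn g (Icc a m) := hg.mono (Icc_subset_Icc_right hmb)
  have hright : MonotoneOn g (Icc m b) := hg.mono (Icc_subset_Icc_left ham)
  have hsplit : ∫ t in a..b, g t = (∫ t in a..m, g t) + ∫ t in m..b, g t :=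
    (intervalIntegral.integral_add_adjacent_intervals (hleft.intervalIntegrable_of_le ham)
      (hright.intervalIntegrable_of_le hmb)).symm
  have h₁ := hleft.mul_le_intervalIntegral ham
  have h₂ := hleft.intervalIntegral_le_mul ham
  have h₃ := hright.mul_le_intervalIntegral hmb
  have h₄ := hright.intervalIntegral_le_mul hmb
  have hgm : g a ≤ g m := hg (left_mem_Icc.2 hab) ⟨ham, hmb⟩ ham
  have hmg : g m ≤ g b := hg ⟨ham, hmb⟩ (right_mem_Icc.2 hab) hmb
  have hm_sub_a : m - a = (b - a) / 2 := by ring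
  have hb_sub_m : b - m = (b - a) / 2 := by ring
  rw [hm_sub_a] at h₁ h₂
  rw [hb_sub_m] at h₃ h₄
  rw [abs_le, hsplit]
  have hba : 0 ≤ (b - a) / 2 := by linarith
  constructor <;> linarith [mul_le_mul_of_nonneg_left hgm hba, mul_le_mul_of_nonneg_left hmg hba]

end MonotoneOn

theorem monotoneOn_sub_mul_of_le_deriv {f f' : ℝ → ℝ} {a b c : ℝ}
    (hcont : ContinuousOn f (Icc a b)) (hderiv : ∀ t ∈ Ioo a b, HasDerivAt f (f' t) t)
    (hle : ∀ t ∈ Ioo a b, c ≤ f' t) : MonotoneOn (fun t => f t - c * t) (Icc a b) := by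
  refine monotoneOn_of_hasDerivWithinAt_nonneg (f' := fun t => f' t - c) (convex_Icc a b)
    (hcont.sub (continuousOn_const.mul continuousOn_id)) (fun t ht => ?_) (fun t ht => ?_)
  · rw [interior_Icc] at ht
    have hline : HasDerivAt (fun t => c * t) c t := by
      simpa using (hasDerivAt_id t).const_mul c
    exact ((hderiv t ht).sub hline).hasDerivWithinAt
  · rw [interior_Icc] at ht
    exact sub_nonneg.2 (hle t ht)

theorem abs_midpoint_sub_average_le_of_monotoneOn_sub_mul {f : ℝ → ℝ} {a b c : ℝ}
    (hab : a < b) (hmono : MonotoneOn (fun t => f t - c * t) (Icc a b)) :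
    |f ((a + b) / 2) - 1 / (b - a) * ∫ t in a..b, f t| ≤
      (b - a) / 2 * ((f b - f a) / (b - a) - c) := by
  have hba : 0 < b - a := sub_pos.2 hab
  have hli : IntervalIntegrable (fun t => c * t) volume a b :=
    (continuous_const_mul c).intervalIntegrable a b
  have hfi : IntervalIntegrable f volume a b := by
    simpa using (hmono.intervalIntegrable_of_le hab.le).add hli
  have hlin : ∫ t in a..b, (f t - c * t) = (∫ t in a..b, f t) - c * ((b ^ 2 - a ^ 2) / 2) := by
    rw [intervalIntegral.integral_sub hfi hli, intervalIntegral.integral_const_mul, integral_id]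
  have key := hmono.abs_mul_midpoint_sub_intervalIntegral_le hab.le
  rw [hlin] at key
  have hdefect : f ((a + b) / 2) - 1 / (b - a) * ∫ t in a..b, f t =
      ((b - a) * (f ((a + b) / 2) - c * ((a + b) / 2)) -
        ((∫ t in a..b, f t) - c * ((b ^ 2 - a ^ 2) / 2))) / (b - a) := by
    field_simp
    ring
  have hincr : (b - a) / 2 * ((f b - f a) / (b - a) - c) =
      (b - a) / 2 * (f b - c * b - (f a - c * a)) / (b - a) := by
    field_simp
    ring
  rw [hdefect, hincr, abs_div, abs_of_pos hba]
  exact div_le_div_of_nonneg_right key hba.le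

theorem companion_ostrowski_L1_midpoint_general
    (a b γ Γ : ℝ) (hab : a < b) (f f' : ℝ → ℝ)
    (hcont : ContinuousOn f (Set.Icc a b))
    (hderiv : ∀ t ∈ Set.Ioo a b, HasDerivAt f (f' t) t)
    (hbound : ∀ t ∈ Set.Icc a b, γ ≤ f' t ∧ f' t ≤ Γ)
    (S : ℝ) (hS : S = (f b - f a) / (b - a)) :
    |f ((a + b) / 2) - (1 / (b - a)) * ∫ t in a..b, f t| ≤ ((b - a) / 2) * (S - γ) ∧
    |f ((a + b) / 2) - (1 / (b - a)) * ∫ t in a..b, f t| ≤ ((b - a) / 2) * (Γ - S) := by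
  subst hS
  constructor
  · exact abs_midpoint_sub_average_le_of_monotoneOn_sub_mul hab <|
      monotoneOn_sub_mul_of_le_deriv hcont hderiv fun t ht => (hbound t (Ioo_subset_Icc_self ht)).1
  · have hmono : MonotoneOn (fun t => -f t - (-Γ) * t) (Icc a b) :=
      monotoneOn_sub_mul_of_le_deriv hcont.neg (fun t ht => (hderiv t ht).neg)
        fun t ht => neg_le_neg (hbound t (Ioo_subset_Icc_self ht)).2
    have h := abs_midpoint_sub_average_le_of_monotoneOn_sub_mul hab hmono
    rw [intervalIntegral.integral_neg, ← abs_neg] at h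
    convert h using 2 <;> ring

/-- **Midpoint inequalities** (Corollary of Theorem 2.1, inequalities (2.17) and (2.18)). -/
theorem companion_ostrowski_L1_midpoint
    (a b γ Γ : ℝ) (hab : a < b) (f f' : ℝ → ℝ)
    (hcont : ContinuousOn f (Set.Icc a b))
    (hderiv : ∀ t ∈ Set.Ioo a b, HasDerivAt f (f' t) t)
    (hint : IntervalIntegrable f' MeasureTheory.volume a b)
    (hbound : ∀ t ∈ Set.Icc a b, γ ≤ f' t ∧ f' t ≤ Γ)
    (S : ℝ) (hS : S = (f b - f a) / (b - a)) :
    |f ((a + b) / 2) - (1 / (b - a)) * ∫ t in a..b, f t| ≤ ((b - a) / 2) * (S - γ) ∧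
    |f ((a + b) / 2) - (1 / (b - a)) * ∫ t in a..b, f t| ≤ ((b - a) / 2) * (Γ - S) :=
  companion_ostrowski_L1_midpoint_general a b γ Γ hab f f' hcont hderiv hbound S hS
end

section
/- Let a < b be real numbers and let f : [a,b] → ℝ be differentiable on (a,b) with f' integrable on [a,b], suppose γ ≤ f'(t) ≤ Γ for all t ∈ [a,b], and additionally assume f is symmetric about the line x = (a+b)/2, i.e., f(a+b−x) = f(x) for all x ∈ [a,b]. Set S = (f(b) − f(a))/(b − a). Then for all x ∈ [a, (a+b)/2], |f(x) − (1/(b−a)) ∫_a^b f(t) dt| ≤ [(b−a)/4 + |x − (3a+b)/4|](S − γ) and |f(x) − (1/(b−a)) ∫_a^b f(t) dt| ≤ [(b−a)/4 + |x − (3a+b)/4|](Γ − S). -/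
/-!
For `a ≤ x ≤ (a + b) / 2` and `y = a + b - x`, integrating `f'` against the Peano kernel equal to
`t - a` on `[a, x]`, `t - (a + b) / 2` on `[x, y]` and `t - b` on `[y, b]` gives, by parts,
`(b - a) / 2 * (f x + f y) - ∫ f`, which symmetry turns into `(b - a) * (f x - mean f)`.
This functional vanishes on affine functions, so replacing `f` by `f t - γ t` (or `Γ t - f t`)
reduces to `f' ≥ 0`, where the kernel bound `|k| ≤ max (x - a) ((a + b) / 2 - x)` gives the
estimate; that maximum is `(b - a) / 4 + |x - (3a + b) / 4|`.
-/

open MeasureTheory Set intervalIntegral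

section

variable {f f' : ℝ → ℝ} {a b c d x : ℝ}

theorem integral_sub_mul_deriv_eq (e : ℝ) (hcd : c ≤ d) (hf : ContinuousOn f (Icc c d))
    (hderiv : ∀ t ∈ Ioo c d, HasDerivAt f (f' t) t) (hf' : IntervalIntegrable f' volume c d) :
    ∫ t in c..d, (t - e) * f' t = (d - e) * f d - (c - e) * f c - ∫ t in c..d, f t := by
  rw [← uIcc_of_le hcd] at hf
  simpa using integral_mul_deriv_eq_deriv_mul_of_hasDerivAt (u := fun t ↦ t - e) (u' := fun _ ↦ 1)
    (by fun_prop) hf (fun t _ ↦ (hasDerivAt_id t).sub_const e)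
    (by rwa [min_eq_left hcd, max_eq_right hcd]) intervalIntegrable_const hf'

theorem abs_integral_sub_mul_le {g : ℝ → ℝ} {e M : ℝ} (hcd : c ≤ d)
    (hg : IntervalIntegrable g volume c d) (hg₀ : ∀ t ∈ Icc c d, 0 ≤ g t)
    (hM : ∀ t ∈ Icc c d, |t - e| ≤ M) :
    |∫ t in c..d, (t - e) * g t| ≤ M * ∫ t in c..d, g t := by
  rw [← intervalIntegral.integral_const_mul]
  refine (abs_integral_le_integral_abs hcd).trans <|
    integral_mono_on hcd (hg.continuousOn_mul (by fun_prop)).abs (hg.const_mul M) fun t ht ↦ ?_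
  rw [abs_mul, abs_of_nonneg (hg₀ t ht)]
  exact mul_le_mul_of_nonneg_right (hM t ht) (hg₀ t ht)

theorem companion_peano_identity (hx : x ∈ Icc a ((a + b) / 2)) (hf : ContinuousOn f (Icc a b))
    (hderiv : ∀ t ∈ Ioo a b, HasDerivAt f (f' t) t) (hf' : IntervalIntegrable f' volume a b) :
    (∫ t in a..x, (t - a) * f' t) + (∫ t in x..a + b - x, (t - (a + b) / 2) * f' t)
        + ∫ t in a + b - x..b, (t - b) * f' t
      = (b - a) / 2 * (f x + f (a + b - x)) - ∫ t in a..b, f t := by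
  obtain ⟨hax, hxm⟩ := hx
  have piece : ∀ c d e, a ≤ c → c ≤ d → d ≤ b →
      ∫ t in c..d, (t - e) * f' t = (d - e) * f d - (c - e) * f c - ∫ t in c..d, f t :=
    fun c d e hac hcd hdb ↦ integral_sub_mul_deriv_eq e hcd (hf.mono (Icc_subset_Icc hac hdb))
      (fun t ht ↦ hderiv t (Ioo_subset_Ioo hac hdb ht))
      (hf'.mono_set (uIcc_subset_uIcc (mem_uIcc_of_le hac (hcd.trans hdb))
        (mem_uIcc_of_le (hac.trans hcd) hdb)))
  have hfi : ∀ c d, a ≤ c → c ≤ d → d ≤ b → IntervalIntegrable f volume c d :=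
    fun c d hac hcd hdb ↦ (hf.mono (Icc_subset_Icc hac hdb)).intervalIntegrable_of_Icc hcd
  rw [piece a x a le_rfl hax (by linarith), piece x (a + b - x) _ hax (by linarith) (by linarith),
    piece (a + b - x) b b (by linarith) (by linarith) le_rfl,
    ← integral_add_adjacent_intervals (hfi a x le_rfl hax (by linarith))
      (hfi x b hax (by linarith) le_rfl),
    ← integral_add_adjacent_intervals (hfi x (a + b - x) hax (by linarith) (by linarith))
      (hfi (a + b - x) b (by linarith) (by linarith) le_rfl)]
  ring

theorem abs_companion_sub_integral_le_of_deriv_nonneg (hx : x ∈ Icc a ((a + b) / 2))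
    (hf : ContinuousOn f (Icc a b)) (hderiv : ∀ t ∈ Ioo a b, HasDerivAt f (f' t) t)
    (hf' : IntervalIntegrable f' volume a b) (hf'₀ : ∀ t ∈ Icc a b, 0 ≤ f' t) :
    |(b - a) / 2 * (f x + f (a + b - x)) - ∫ t in a..b, f t|
      ≤ max (x - a) ((a + b) / 2 - x) * (f b - f a) := by
  set M := max (x - a) ((a + b) / 2 - x)
  obtain ⟨hax, hxm⟩ := hx
  have hf'i : ∀ c d, a ≤ c → c ≤ d → d ≤ b → IntervalIntegrable f' volume c d :=
    fun c d hac hcd hdb ↦ hf'.mono_set (uIcc_subset_uIcc (mem_uIcc_of_le hac (hcd.trans hdb))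
      (mem_uIcc_of_le (hac.trans hcd) hdb))
  have piece : ∀ c d e, a ≤ c → c ≤ d → d ≤ b → (∀ t ∈ Icc c d, |t - e| ≤ M) →
      |∫ t in c..d, (t - e) * f' t| ≤ M * ∫ t in c..d, f' t :=
    fun c d e hac hcd hdb hM ↦ abs_integral_sub_mul_le hcd (hf'i c d hac hcd hdb)
      (fun t ht ↦ hf'₀ t ⟨hac.trans ht.1, ht.2.trans hdb⟩) hM
  have h₁ := piece a x a le_rfl hax (by linarith) fun t ht ↦ by
    rw [abs_le]; constructor <;> linarith [ht.1, ht.2, le_max_left (x - a) ((a + b) / 2 - x)]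
  have h₂ := piece x (a + b - x) ((a + b) / 2) hax (by linarith) (by linarith) fun t ht ↦ by
    rw [abs_le]; constructor <;> linarith [ht.1, ht.2, le_max_right (x - a) ((a + b) / 2 - x)]
  have h₃ := piece (a + b - x) b b (by linarith) (by linarith) le_rfl fun t ht ↦ by
    rw [abs_le]; constructor <;> linarith [ht.1, ht.2, le_max_left (x - a) ((a + b) / 2 - x)]
  have hsplit : ∫ t in a..b, f' t
      = (∫ t in a..x, f' t) + (∫ t in x..a + b - x, f' t) + ∫ t in a + b - x..b, f' t := by
    rw [integral_add_adjacent_intervals (hf'i a x le_rfl hax (by linarith))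
        (hf'i x (a + b - x) hax (by linarith) (by linarith)),
      integral_add_adjacent_intervals (hf'i a (a + b - x) le_rfl (by linarith) (by linarith))
        (hf'i (a + b - x) b (by linarith) (by linarith) le_rfl)]
  rw [← companion_peano_identity ⟨hax, hxm⟩ hf hderiv hf',
    ← integral_eq_sub_of_hasDerivAt_of_le (by linarith) hf hderiv hf', hsplit]
  calc _ ≤ |∫ t in a..x, (t - a) * f' t| + |∫ t in x..a + b - x, (t - (a + b) / 2) * f' t|
        + |∫ t in a + b - x..b, (t - b) * f' t| := abs_add_three _ _ _
    _ ≤ _ := by linarith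

theorem abs_companion_sub_integral_le_of_le_deriv {γ : ℝ} (hx : x ∈ Icc a ((a + b) / 2))
    (hf : ContinuousOn f (Icc a b)) (hderiv : ∀ t ∈ Ioo a b, HasDerivAt f (f' t) t)
    (hf' : IntervalIntegrable f' volume a b) (hγ : ∀ t ∈ Icc a b, γ ≤ f' t) :
    |(b - a) / 2 * (f x + f (a + b - x)) - ∫ t in a..b, f t|
      ≤ max (x - a) ((a + b) / 2 - x) * (f b - f a - γ * (b - a)) := by
  have hab : a ≤ b := by linarith [hx.1, hx.2]
  have key := abs_companion_sub_integral_le_of_deriv_nonneg (f := fun t ↦ f t - γ * t)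
    (f' := fun t ↦ f' t - γ) hx (hf.sub (by fun_prop))
    (fun t ht ↦ by simpa using (hderiv t ht).fun_sub ((hasDerivAt_id' t).const_mul γ))
    (hf'.sub intervalIntegrable_const) fun t ht ↦ sub_nonneg.2 (hγ t ht)
  rw [integral_sub (hf.intervalIntegrable_of_Icc hab) (intervalIntegrable_id.const_mul γ),
    intervalIntegral.integral_const_mul, integral_id] at key
  convert key using 2 <;> ring

theorem abs_companion_sub_integral_le_of_deriv_le {Γ : ℝ} (hx : x ∈ Icc a ((a + b) / 2))
    (hf : ContinuousOn f (Icc a b)) (hderiv : ∀ t ∈ Ioo a b, HasDerivAt f (f' t) t)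
    (hf' : IntervalIntegrable f' volume a b) (hΓ : ∀ t ∈ Icc a b, f' t ≤ Γ) :
    |(b - a) / 2 * (f x + f (a + b - x)) - ∫ t in a..b, f t|
      ≤ max (x - a) ((a + b) / 2 - x) * (Γ * (b - a) - (f b - f a)) := by
  have key := abs_companion_sub_integral_le_of_le_deriv (f := -f) (f' := -f') (γ := -Γ) hx hf.neg
    (fun t ht ↦ (hderiv t ht).neg) hf'.neg fun t ht ↦ neg_le_neg (hΓ t ht)
  simp only [Pi.neg_apply, intervalIntegral.integral_neg] at key
  rw [← abs_neg]
  convert key using 2 <;> ring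

end

/-- **Ostrowski type inequality for symmetric functions** (Corollary 2.4, inequalities
(2.19) and (2.20)): if additionally `f (a + b - x) = f x` on `[a,b]`, then for all
`x ∈ [a, (a+b)/2]`,
`|f x - (1/(b-a)) ∫_a^b f| ≤ ((b-a)/4 + |x - (3a+b)/4|) (S - γ)` and the analogous
inequality with `Γ - S`. -/
theorem companion_ostrowski_L1_symmetric
    (a b γ Γ : ℝ) (hab : a < b) (f f' : ℝ → ℝ)
    (hcont : ContinuousOn f (Set.Icc a b))
    (hderiv : ∀ t ∈ Set.Ioo a b, HasDerivAt f (f' t) t)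
    (hint : IntervalIntegrable f' MeasureTheory.volume a b)
    (hbound : ∀ t ∈ Set.Icc a b, γ ≤ f' t ∧ f' t ≤ Γ)
    (hsym : ∀ x ∈ Set.Icc a b, f (a + b - x) = f x)
    (S : ℝ) (hS : S = (f b - f a) / (b - a)) :
    ∀ x ∈ Set.Icc a ((a + b) / 2),
      |f x - (1 / (b - a)) * ∫ t in a..b, f t|
          ≤ ((b - a) / 4 + |x - (3 * a + b) / 4|) * (S - γ) ∧
      |f x - (1 / (b - a)) * ∫ t in a..b, f t|
          ≤ ((b - a) / 4 + |x - (3 * a + b) / 4|) * (Γ - S) := by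
  intro x hx
  obtain ⟨hax, hxm⟩ := hx
  have hba : 0 < b - a := sub_pos.2 hab
  have hM : max (x - a) ((a + b) / 2 - x) = (b - a) / 4 + |x - (3 * a + b) / 4| := by
    rcases abs_cases (x - (3 * a + b) / 4) with ⟨h, _⟩ | ⟨h, _⟩ <;> rw [h]
    · rw [max_eq_left (by linarith)]; ring
    · rw [max_eq_right (by linarith)]; ring
  have hcompanion : (b - a) / 2 * (f x + f (a + b - x)) - ∫ t in a..b, f t
      = (b - a) * (f x - 1 / (b - a) * ∫ t in a..b, f t) := by
    rw [hsym x ⟨hax, by linarith⟩]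
    field_simp
    ring
  have hS' : f b - f a = S * (b - a) := by rw [hS]; field_simp
  have lower := abs_companion_sub_integral_le_of_le_deriv ⟨hax, hxm⟩ hcont hderiv hint
    fun t ht ↦ (hbound t ht).1
  have upper := abs_companion_sub_integral_le_of_deriv_le ⟨hax, hxm⟩ hcont hderiv hint
    fun t ht ↦ (hbound t ht).2
  rw [hcompanion, abs_mul, abs_of_pos hba, hM, hS'] at lower upper
  exact ⟨le_of_mul_le_mul_left (lower.trans_eq (by ring)) hba,
    le_of_mul_le_mul_left (upper.trans_eq (by ring)) hba⟩
end

section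
/- Let a < b be real numbers and let f : [a,b] → ℝ be twice continuously differentiable on (a,b) with f'' ∈ L²[a,b]. Then for all x ∈ [a, (a+b)/2], |(f(x) + f(a+b−x))/2 − (1/(b−a)) ∫_a^b f(t) dt| ≤ ((b−a)^{1/2}/π) · [ (b−a)²/48 + (x − (3a+b)/4)² ]^{1/2} · ‖f''‖₂, where ‖f''‖₂ = (∫_a^b (f''(t))² dt)^{1/2}. -/
open MeasureTheory intervalIntegral Set
open scoped Interval Real

/-!
Let `K` be the continuous kernel that equals `(t - a)²/2` on `[a, x]`, `(t - b)²/2` on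
`[a + b - x, b]` and a quadratic with `K'' = 1` in between. Two integrations by parts on each
piece give `∫ K f'' = ∫ f - (b - a)/2 · (f x + f (a + b - x))`, so by Cauchy–Schwarz the
left-hand side of the inequality is at most `‖K‖₂ ‖f''‖₂ / (b - a)`. An explicit computation gives
`‖K‖₂² ≤ (b - a)³ ((b - a)²/48 + (x - (3a + b)/4)²) / 10`, and `π² < 10`.
As `f'` need not be continuous up to the endpoints, it is first replaced by its extension
`t ↦ f' m + ∫_m^t f''`, which is continuous on `[a, b]` because `f''` is integrable.
-/

theorem IntervalIntegrable.of_sq {f : ℝ → ℝ} {a b : ℝ}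
    (hf : AEStronglyMeasurable f (volume.restrict (Ι a b)))
    (h : IntervalIntegrable (fun t => f t ^ 2) volume a b) :
    IntervalIntegrable f volume a b := by
  rw [intervalIntegrable_iff] at h ⊢
  have : IsFiniteMeasure (volume.restrict (Ι a b)) :=
    isFiniteMeasure_restrict.2 measure_Ioc_lt_top.ne
  exact ((memLp_two_iff_integrable_sq hf).2 h).integrable one_le_two

theorem aestronglyMeasurable_of_hasDerivAt {f f' : ℝ → ℝ} {a b : ℝ}
    (h : ∀ t ∈ Ioo a b, HasDerivAt f (f' t) t) :
    AEStronglyMeasurable f' (volume.restrict (Ioc a b)) := by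
  rw [← Measure.restrict_congr_set Ioo_ae_eq_Ioc]
  refine (stronglyMeasurable_deriv f).aestronglyMeasurable.congr ?_
  filter_upwards [ae_restrict_mem measurableSet_Ioo] with t ht using (h t ht).deriv

namespace intervalIntegral

theorem abs_integral_mul_le_sqrt_mul_sqrt {μ : Measure ℝ} {c d : ℝ} (hcd : c ≤ d) {P F : ℝ → ℝ}
    (hPF : IntervalIntegrable (fun t => P t * F t) μ c d)
    (hP : IntervalIntegrable (fun t => P t ^ 2) μ c d)
    (hF : IntervalIntegrable (fun t => F t ^ 2) μ c d) :
    |∫ t in c..d, P t * F t ∂μ|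
      ≤ √(∫ t in c..d, P t ^ 2 ∂μ) * √(∫ t in c..d, F t ^ 2 ∂μ) := by
  set A := ∫ t in c..d, P t ^ 2 ∂μ
  set B := ∫ t in c..d, F t ^ 2 ∂μ
  set S := ∫ t in c..d, P t * F t ∂μ
  have quadratic_nonneg : ∀ l : ℝ, 0 ≤ A * (l * l) + (-2 * S) * l + B := by
    intro l
    have expand : ∫ t in c..d, (l * P t - F t) ^ 2 ∂μ = A * (l * l) + (-2 * S) * l + B := by
      simp_rw [show ∀ t, (l * P t - F t) ^ 2 = (l ^ 2 * P t ^ 2 - 2 * l * (P t * F t)) + F t ^ 2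
        from fun t => by ring]
      rw [integral_add ((hP.const_mul _).sub (hPF.const_mul _)) hF,
        integral_sub (hP.const_mul _) (hPF.const_mul _), intervalIntegral.integral_const_mul,
        intervalIntegral.integral_const_mul]
      ring
    exact expand ▸ integral_nonneg hcd fun t _ => sq_nonneg _
  have hdiscr := discrim_le_zero quadratic_nonneg
  rw [discrim] at hdiscr
  rw [← Real.sqrt_mul (integral_nonneg hcd fun t _ => sq_nonneg _), ← Real.sqrt_sq_eq_abs]
  exact Real.sqrt_le_sqrt (by linarith)

theorem integral_add_add_adjacent_intervals {μ : Measure ℝ} {φ : ℝ → ℝ} {a x y b : ℝ}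
    (hax : a ≤ x) (hxy : x ≤ y) (hyb : y ≤ b) (h : IntervalIntegrable φ μ a b) :
    ∫ t in a..x, φ t ∂μ + ∫ t in x..y, φ t ∂μ + ∫ t in y..b, φ t ∂μ = ∫ t in a..b, φ t ∂μ := by
  have hsub : ∀ {c d}, a ≤ c → c ≤ d → d ≤ b → IntervalIntegrable φ μ c d := fun hc hcd hd =>
    h.mono_set <| by
      rw [uIcc_of_le hcd, uIcc_of_le (hc.trans (hcd.trans hd))]
      exact Icc_subset_Icc hc hd
  rw [integral_add_adjacent_intervals (hsub le_rfl hax (hxy.trans hyb)) (hsub hax hxy hyb),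
    integral_add_adjacent_intervals (hsub le_rfl (hax.trans hxy) hyb)
      (hsub (hax.trans hxy) hyb le_rfl)]

end intervalIntegral

theorem exists_continuousOn_Icc_of_hasDerivAt {f f' : ℝ → ℝ} {a b : ℝ} (hab : a < b)
    (hderiv : ∀ t ∈ Ioo a b, HasDerivAt f (f' t) t) (hint : IntervalIntegrable f' volume a b) :
    ∃ g, ContinuousOn g (Icc a b) ∧ EqOn f g (Ioo a b) ∧ ∀ t ∈ Ioo a b, HasDerivAt g (f' t) t := by
  obtain ⟨m, hm⟩ := nonempty_Ioo.2 hab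
  set g : ℝ → ℝ := fun t => f m + ∫ s in m..t, f' s
  have hfg : EqOn f g (Ioo a b) := fun t ht => by
    have hsub : [[m, t]] ⊆ Ioo a b := ordConnected_Ioo.uIcc_subset hm ht
    have ftc : ∫ s in m..t, f' s = f t - f m :=
      integral_eq_sub_of_hasDerivAt (fun s hs => hderiv s (hsub hs))
        (hint.mono_set (uIcc_of_le hab.le ▸ hsub.trans Ioo_subset_Icc_self))
    simp [g, ftc]
  refine ⟨g, ?_, hfg, fun t ht => (hderiv t ht).congr_of_eventuallyEq ?_⟩
  · rw [← uIcc_of_le hab.le]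
    exact continuousOn_const.add
      (continuousOn_primitive_interval' hint (uIcc_of_le hab.le ▸ Ioo_subset_Icc_self hm))
  · filter_upwards [isOpen_Ioo.mem_nhds ht] with s hs using (hfg hs).symm

theorem integral_half_sq_sub_add_mul_eq {f f' f'' : ℝ → ℝ} {c d : ℝ} (e k : ℝ) (hcd : c ≤ d)
    (hf : ContinuousOn f (Icc c d)) (hf' : ContinuousOn f' (Icc c d))
    (hderiv : ∀ t ∈ Ioo c d, HasDerivAt f (f' t) t)
    (hderiv2 : ∀ t ∈ Ioo c d, HasDerivAt f' (f'' t) t)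
    (hint : IntervalIntegrable f'' volume c d) :
    ∫ t in c..d, ((t - e) ^ 2 / 2 + k) * f'' t
      = (((d - e) ^ 2 / 2 + k) * f' d - (d - e) * f d)
        - (((c - e) ^ 2 / 2 + k) * f' c - (c - e) * f c) + ∫ t in c..d, f t := by
  have hf_int : IntervalIntegrable f volume c d := (uIcc_of_le hcd ▸ hf).intervalIntegrable
  have hpf''_int : IntervalIntegrable (fun t => ((t - e) ^ 2 / 2 + k) * f'' t) volume c d :=
    hint.continuousOn_mul (by fun_prop)
  -- `(p f' - p' f)' = p f'' - f` since `p'' = 1`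
  have ftc : ∫ t in c..d, (((t - e) ^ 2 / 2 + k) * f'' t - f t)
      = (((d - e) ^ 2 / 2 + k) * f' d - (d - e) * f d)
        - (((c - e) ^ 2 / 2 + k) * f' c - (c - e) * f c) := by
    refine integral_eq_sub_of_hasDerivAt_of_le
      (f := fun t => ((t - e) ^ 2 / 2 + k) * f' t - (t - e) * f t) hcd (by fun_prop)
      (fun t ht => ?_) (hpf''_int.sub hf_int)
    have hlin : HasDerivAt (fun t : ℝ => t - e) 1 t := (hasDerivAt_id t).sub_const e
    have hquad : HasDerivAt (fun t : ℝ => (t - e) ^ 2 / 2 + k) (t - e) t := by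
      simpa using ((hlin.pow 2).div_const 2).add_const k
    exact ((hquad.mul (hderiv2 t ht)).sub (hlin.mul (hderiv t ht))).congr_deriv (by ring)
  rw [integral_sub hpf''_int hf_int] at ftc
  linarith

theorem integral_half_sq_sub_add_sq (c d e k : ℝ) :
    ∫ t in c..d, ((t - e) ^ 2 / 2 + k) ^ 2
      = ((d - e) ^ 5 / 20 + k * (d - e) ^ 3 / 3 + k ^ 2 * (d - e))
        - ((c - e) ^ 5 / 20 + k * (c - e) ^ 3 / 3 + k ^ 2 * (c - e)) := by
  apply integral_eq_sub_of_hasDerivAt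
  · intro t _
    have hlin : HasDerivAt (fun t : ℝ => t - e) 1 t := (hasDerivAt_id t).sub_const e
    exact ((((hlin.pow 5).div_const 20).add (((hlin.pow 3).const_mul k).div_const 3)).add
      (hlin.const_mul (k ^ 2))).congr_deriv (by ring)
  · apply Continuous.intervalIntegrable
    fun_prop

/-- The constant of the middle piece makes the kernel continuous, so that in the integrations by
parts the `K f'` boundary terms cancel and only the jumps of `K'` at `x` and `a + b - x` remain. -/
noncomputable def companionKernel (a b x t : ℝ) : ℝ :=
  if t ≤ x then (t - a) ^ 2 / 2
  else if t ≤ a + b - x then (t - (a + b) / 2) ^ 2 / 2 + ((x - a) ^ 2 - ((a + b) / 2 - x) ^ 2) / 2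
  else (t - b) ^ 2 / 2

section companionKernel

variable {a b x : ℝ}

theorem continuous_companionKernel (hxm : x ≤ (a + b) / 2) : Continuous (companionKernel a b x) :=
  Continuous.if_le (by fun_prop)
    (Continuous.if_le (by fun_prop) (by fun_prop) (by fun_prop) (by fun_prop)
      (by rintro t rfl; ring))
    (by fun_prop) (by fun_prop) (by rintro t rfl; rw [if_pos (by linarith)]; ring)

theorem companionKernel_eqOn_left :
    EqOn (companionKernel a b x) (fun t => (t - a) ^ 2 / 2 + 0) (Ioo a x) := fun t ht => by
  simp [companionKernel, ht.2.le]

theorem companionKernel_eqOn_mid :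
    EqOn (companionKernel a b x)
      (fun t => (t - (a + b) / 2) ^ 2 / 2 + ((x - a) ^ 2 - ((a + b) / 2 - x) ^ 2) / 2)
      (Ioo x (a + b - x)) := fun t ht => by
  simp [companionKernel, ht.1, ht.2.le]

theorem companionKernel_eqOn_right (hxm : x ≤ (a + b) / 2) :
    EqOn (companionKernel a b x) (fun t => (t - b) ^ 2 / 2 + 0) (Ioo (a + b - x) b) :=
  fun t ht => by
  rw [companionKernel, if_neg (by linarith [ht.1]), if_neg (not_le.2 ht.1)]
  exact (add_zero _).symm

theorem integral_companionKernel_mul {f f' f'' : ℝ → ℝ} (hax : a ≤ x) (hxm : x ≤ (a + b) / 2)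
    (hf : ContinuousOn f (Icc a b)) (hf' : ContinuousOn f' (Icc a b))
    (hderiv : ∀ t ∈ Ioo a b, HasDerivAt f (f' t) t)
    (hderiv2 : ∀ t ∈ Ioo a b, HasDerivAt f' (f'' t) t)
    (hint : IntervalIntegrable f'' volume a b) :
    ∫ t in a..b, companionKernel a b x t * f'' t
      = (∫ t in a..b, f t) - (b - a) / 2 * (f x + f (a + b - x)) := by
  have hxy : x ≤ a + b - x := by linarith
  have hyb : a + b - x ≤ b := by linarith
  have hab : a ≤ b := by linarith
  have piece {c d} (e k : ℝ) (hc : a ≤ c) (hcd : c ≤ d) (hd : d ≤ b) :=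
    integral_half_sq_sub_add_mul_eq e k hcd (hf.mono (Icc_subset_Icc hc hd))
      (hf'.mono (Icc_subset_Icc hc hd)) (fun t ht => hderiv t (Ioo_subset_Ioo hc hd ht))
      (fun t ht => hderiv2 t (Ioo_subset_Ioo hc hd ht))
      (hint.mono_set (by rw [uIcc_of_le hcd, uIcc_of_le hab]; exact Icc_subset_Icc hc hd))
  have hf_int : IntervalIntegrable f volume a b := (uIcc_of_le hab ▸ hf).intervalIntegrable
  rw [← integral_add_add_adjacent_intervals hax hxy hyb
      (hint.continuousOn_mul (continuous_companionKernel hxm).continuousOn),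
    ← integral_add_add_adjacent_intervals hax hxy hyb hf_int,
    integral_congr_Ioo_of_le hax fun t ht => by rw [companionKernel_eqOn_left ht],
    integral_congr_Ioo_of_le hxy fun t ht => by rw [companionKernel_eqOn_mid ht],
    integral_congr_Ioo_of_le hyb fun t ht => by rw [companionKernel_eqOn_right hxm ht],
    piece _ _ le_rfl hax (hxy.trans hyb), piece _ _ hax hxy hyb,
    piece _ _ (hax.trans hxy) hyb le_rfl]
  ring

theorem integral_companionKernel_sq_le (hax : a ≤ x) (hxm : x ≤ (a + b) / 2) :
    ∫ t in a..b, companionKernel a b x t ^ 2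
      ≤ (b - a) ^ 3 * ((b - a) ^ 2 / 48 + (x - (3 * a + b) / 4) ^ 2) / 10 := by
  have hxy : x ≤ a + b - x := by linarith
  have hyb : a + b - x ≤ b := by linarith
  rw [← integral_add_add_adjacent_intervals (φ := fun t => companionKernel a b x t ^ 2)
      hax hxy hyb (((continuous_companionKernel hxm).pow 2).intervalIntegrable _ _),
    integral_congr_Ioo_of_le hax fun t ht => by rw [companionKernel_eqOn_left ht],
    integral_congr_Ioo_of_le hxy fun t ht => by rw [companionKernel_eqOn_mid ht],
    integral_congr_Ioo_of_le hyb fun t ht => by rw [companionKernel_eqOn_right hxm ht],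
    integral_half_sq_sub_add_sq, integral_half_sq_sub_add_sq, integral_half_sq_sub_add_sq]
  obtain ⟨u, hu, rfl⟩ : ∃ u, 0 ≤ u ∧ x = a + u := ⟨x - a, by linarith, by ring⟩
  obtain ⟨w, hw, rfl⟩ : ∃ w, 0 ≤ w ∧ b = a + 2 * (u + w) :=
    ⟨(a + b) / 2 - a - u, by linarith, by ring⟩
  ring_nf
  nlinarith [pow_nonneg hu 5, mul_nonneg (pow_nonneg hu 4) hw,
    mul_nonneg (pow_nonneg hu 3) (pow_nonneg hw 2), mul_nonneg (pow_nonneg hu 2) (pow_nonneg hw 3),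
    mul_nonneg hu (pow_nonneg hw 4), pow_nonneg hw 5]

theorem sqrt_integral_companionKernel_sq_le (hax : a ≤ x) (hxm : x ≤ (a + b) / 2) :
    √(∫ t in a..b, companionKernel a b x t ^ 2)
      ≤ (b - a) * (√(b - a) / π * √((b - a) ^ 2 / 48 + (x - (3 * a + b) / 4) ^ 2)) := by
  have hba : 0 ≤ b - a := by linarith
  set D := (b - a) ^ 2 / 48 + (x - (3 * a + b) / 4) ^ 2
  have hD : 0 ≤ D := by positivity
  have hπ : π ^ 2 ≤ 10 := by nlinarith [Real.pi_lt_d2, Real.pi_pos]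
  rw [← Real.sqrt_sq (by positivity : 0 ≤ (b - a) * (√(b - a) / π * √D))]
  refine Real.sqrt_le_sqrt ((integral_companionKernel_sq_le hax hxm).trans ?_)
  calc (b - a) ^ 3 * D / 10 ≤ (b - a) ^ 3 * D / π ^ 2 := by gcongr
    _ = _ := by rw [mul_pow, mul_pow, div_pow, Real.sq_sqrt hba, Real.sq_sqrt hD]; ring

end companionKernel

theorem companion_ostrowski_second_deriv_L2_general
    (a b : ℝ) (hab : a < b) (f f' f'' : ℝ → ℝ)
    (hcont : ContinuousOn f (Set.Icc a b))
    (hderiv : ∀ t ∈ Set.Ioo a b, HasDerivAt f (f' t) t)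
    (hderiv2 : ∀ t ∈ Set.Ioo a b, HasDerivAt f' (f'' t) t)
    (hL2 : IntervalIntegrable (fun t => (f'' t) ^ 2) MeasureTheory.volume a b) :
    ∀ x ∈ Set.Icc a ((a + b) / 2),
      |(f x + f (a + b - x)) / 2 - (1 / (b - a)) * ∫ t in a..b, f t|
        ≤ Real.sqrt (b - a) / Real.pi *
            Real.sqrt ((b - a) ^ 2 / 48 + (x - (3 * a + b) / 4) ^ 2) *
            Real.sqrt (∫ t in a..b, (f'' t) ^ 2) := by
  rintro x ⟨hax, hxm⟩
  have hint : IntervalIntegrable f'' volume a b :=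
    hL2.of_sq (uIoc_of_le hab.le ▸ aestronglyMeasurable_of_hasDerivAt hderiv2)
  obtain ⟨g, hg, hf'g, hgf''⟩ := exists_continuousOn_Icc_of_hasDerivAt hab hderiv2 hint
  have hfg : ∀ t ∈ Ioo a b, HasDerivAt f (g t) t := fun t ht => hf'g ht ▸ hderiv t ht
  have hK := continuous_companionKernel hxm
  have hcs := abs_integral_mul_le_sqrt_mul_sqrt hab.le (hint.continuousOn_mul hK.continuousOn)
    ((hK.pow 2).intervalIntegrable _ _) hL2
  rw [integral_companionKernel_mul hax hxm hcont hg hfg hgf'' hint] at hcs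
  have hba : 0 < b - a := sub_pos.2 hab
  have hLHS : (f x + f (a + b - x)) / 2 - (1 / (b - a)) * ∫ t in a..b, f t
      = -((∫ t in a..b, f t) - (b - a) / 2 * (f x + f (a + b - x))) / (b - a) := by
    field_simp [hba.ne']
    ring
  rw [hLHS, abs_div, abs_neg, abs_of_pos hba, div_le_iff₀ hba]
  calc _ ≤ _ := hcs
    _ ≤ _ := mul_le_mul_of_nonneg_right (sqrt_integral_companionKernel_sq_le hax hxm)
      (Real.sqrt_nonneg _)
    _ = _ := by ring

/-- **Companion of Ostrowski's inequality for `f'' ∈ L²[a,b]`** (Theorem 2.2, inequality (2.23)).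
If `f` is continuous on `[a,b]` and twice continuously differentiable on `(a,b)` with second
derivative `f''` square-integrable on `[a,b]`, then for all `x ∈ [a, (a+b)/2]`,
`|(f x + f (a+b-x))/2 - (1/(b-a)) ∫_a^b f|
  ≤ (√(b-a)/π) · √((b-a)²/48 + (x - (3a+b)/4)²) · ‖f''‖₂`. -/
theorem companion_ostrowski_second_deriv_L2
    (a b : ℝ) (hab : a < b) (f f' f'' : ℝ → ℝ)
    (hcont : ContinuousOn f (Set.Icc a b))
    (hderiv : ∀ t ∈ Set.Ioo a b, HasDerivAt f (f' t) t)
    (hderiv2 : ∀ t ∈ Set.Ioo a b, HasDerivAt f' (f'' t) t)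
    (hcont2 : ContinuousOn f'' (Set.Ioo a b))
    (hL2 : IntervalIntegrable (fun t => (f'' t) ^ 2) MeasureTheory.volume a b) :
    ∀ x ∈ Set.Icc a ((a + b) / 2),
      |(f x + f (a + b - x)) / 2 - (1 / (b - a)) * ∫ t in a..b, f t|
        ≤ Real.sqrt (b - a) / Real.pi *
            Real.sqrt ((b - a) ^ 2 / 48 + (x - (3 * a + b) / 4) ^ 2) *
            Real.sqrt (∫ t in a..b, (f'' t) ^ 2) :=
  companion_ostrowski_second_deriv_L2_general a b hab f f' f'' hcont hderiv hderiv2 hL2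
end

section
/- Let a < b be real numbers and let f : [a,b] → ℝ be absolutely continuous on [a,b] with f' ∈ L²[a,b]. Set σ(f') = ‖f'‖₂² − (f(b) − f(a))²/(b − a). Then |(f((3a+b)/4) + f((a+3b)/4))/2 − (1/(b−a)) ∫_a^b f(t) dt| ≤ ((b−a)^{1/2}/(4√3)) · √(σ(f')). -/
/-!
Let `p = (3a+b)/4`, `q = (a+3b)/4` and let `K` be the Peano kernel equal to `t - a` on `[a, p]`,
`t - (a+b)/2` on `(p, q]` and `t - b` on `(q, b]`. Integrating by parts on each of the three
pieces (the primitive of an integrable function is absolutely continuous) gives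
`∫ K f' = (b-a)/2 · (f p + f q) - ∫ f`. Since the two-point rule is exact for linear functions,
`f'` may be replaced by `f' - (f b - f a)/(b-a)`, whose squared `L²` norm is `σ(f')`, and
Cauchy–Schwarz with `∫ K² = (b-a)³/48` gives the bound.
-/

open MeasureTheory Set

theorem abs_integral_mul_le_sqrt_mul_sqrt {α : Type*} [MeasurableSpace α] {μ : Measure α}
    {w z : α → ℝ} (hw : MemLp w 2 μ) (hz : MemLp z 2 μ) :
    |∫ x, w x * z x ∂μ| ≤ √(∫ x, w x ^ 2 ∂μ) * √(∫ x, z x ^ 2 ∂μ) := by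
  have holder := integral_mul_norm_le_Lp_mul_Lq (f := w) (g := z) Real.HolderConjugate.two_two
    (by rwa [ENNReal.ofReal_ofNat]) (by rwa [ENNReal.ofReal_ofNat])
  simp only [Real.norm_eq_abs, Real.rpow_two, sq_abs, ← Real.sqrt_eq_rpow] at holder
  calc |∫ x, w x * z x ∂μ| ≤ ∫ x, |w x| * |z x| ∂μ := by
        simpa only [Real.norm_eq_abs, abs_mul] using
          norm_integral_le_integral_norm (fun x => w x * z x)
    _ ≤ _ := holder

section Primitive

variable {F g : ℝ → ℝ}

theorem sub_eq_integral_of_mem_Icc {a b : ℝ} (hg : IntervalIntegrable g volume a b)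
    (hF : ∀ x ∈ Icc a b, F x - F a = ∫ t in a..x, g t) {u x : ℝ} (hu : u ∈ Icc a b)
    (hx : x ∈ Icc a b) : F x - F u = ∫ t in u..x, g t := by
  have hg_on {y : ℝ} (hy : y ∈ Icc a b) : IntervalIntegrable g volume a y :=
    hg.mono_set (uIcc_subset_uIcc left_mem_uIcc (Icc_subset_uIcc hy))
  rw [← intervalIntegral.integral_interval_sub_left (hg_on hx) (hg_on hu)]
  linarith [hF x hx, hF u hu]

theorem continuousOn_of_sub_eq_integral {u v : ℝ} (hg : IntervalIntegrable g volume u v)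
    (hF : ∀ x ∈ Icc u v, F x - F u = ∫ t in u..x, g t) : ContinuousOn F (Icc u v) := by
  have hprim : ContinuousOn (fun x => F u + ∫ t in u..x, g t) (Icc u v) :=
    continuousOn_const.add
      ((intervalIntegral.continuousOn_primitive_interval' hg left_mem_uIcc).mono Icc_subset_uIcc)
  exact hprim.congr fun x hx => by linarith [hF x hx]

theorem sub_mul_sub_eq_integral_sub_const {a b : ℝ} (hg : IntervalIntegrable g volume a b)
    (hF : ∀ x ∈ Icc a b, F x - F a = ∫ t in a..x, g t) (c : ℝ) :
    ∀ x ∈ Icc a b, (F x - c * x) - (F a - c * a) = ∫ t in a..x, (g t - c) := by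
  intro x hx
  rw [intervalIntegral.integral_sub
    (hg.mono_set (uIcc_subset_uIcc left_mem_uIcc (Icc_subset_uIcc hx))) intervalIntegrable_const,
    ← hF x hx, intervalIntegral.integral_const, smul_eq_mul]
  ring

theorem integral_sub_mul_eq_of_sub_eq_integral {u v : ℝ} (c : ℝ) (huv : u ≤ v)
    (hg : IntervalIntegrable g volume u v) (hF : ∀ x ∈ Icc u v, F x - F u = ∫ t in u..x, g t) :
    ∫ t in u..v, (t - c) * g t = (v - c) * F v - (u - c) * F u - ∫ t in u..v, F t := by
  set P : ℝ → ℝ := fun x => ∫ t in u..x, g t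
  have hP : AbsolutelyContinuousOnInterval P u v :=
    hg.absolutelyContinuousOnInterval_intervalIntegral left_mem_uIcc
  have hlin : AbsolutelyContinuousOnInterval (fun t => t - c) u v :=
    (contDiff_id.sub contDiff_const).contDiffOn.absolutelyContinuousOnInterval
  have hderiv : ∫ t in u..v, (t - c) * g t = ∫ t in u..v, (t - c) * deriv P t := by
    refine intervalIntegral.integral_congr_ae ?_
    filter_upwards [hg.ae_hasDerivAt_integral] with t ht htuv
    rw [(ht (uIoc_subset_uIcc htuv) u left_mem_uIcc).deriv]
  have hFP : ∫ t in u..v, F t = ∫ t in u..v, (F u + P t) :=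
    intervalIntegral.integral_congr fun x hx => by linarith [hF x (uIcc_of_le huv ▸ hx)]
  have hPv : P v = F v - F u := (hF v ⟨huv, le_rfl⟩).symm
  rw [hderiv, hlin.integral_mul_deriv_eq_deriv_mul hP, hFP,
    intervalIntegral.integral_add intervalIntegrable_const hP.continuousOn.intervalIntegrable]
  simp only [hPv, P, intervalIntegral.integral_same, mul_zero, sub_zero, differentiableAt_fun_id,
    differentiableAt_const, deriv_fun_sub, deriv_id'', deriv_const', one_mul,
    intervalIntegral.integral_const, smul_eq_mul]
  ring

end Primitive

theorem integral_sub_average_sq {g : ℝ → ℝ} {a b : ℝ} (hg : IntervalIntegrable g volume a b)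
    (hg2 : IntervalIntegrable (fun t => g t ^ 2) volume a b) :
    ∫ t in a..b, (g t - (∫ t in a..b, g t) / (b - a)) ^ 2 =
      (∫ t in a..b, g t ^ 2) - (∫ t in a..b, g t) ^ 2 / (b - a) := by
  obtain rfl | hab := eq_or_ne a b
  · simp
  set c := (∫ t in a..b, g t) / (b - a)
  have hexpand : ∀ t, (g t - c) ^ 2 = g t ^ 2 - 2 * c * g t + c ^ 2 := fun t => by ring
  simp only [hexpand]
  rw [intervalIntegral.integral_add (hg2.sub (hg.const_mul _)) intervalIntegrable_const,
    intervalIntegral.integral_sub hg2 (hg.const_mul _), intervalIntegral.integral_const_mul,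
    intervalIntegral.integral_const, smul_eq_mul]
  simp only [c]
  field_simp [sub_ne_zero.2 hab.symm]
  ring

noncomputable def quarterPointKernel (a b t : ℝ) : ℝ :=
  if t ≤ (3 * a + b) / 4 then t - a else if t ≤ (a + 3 * b) / 4 then t - (a + b) / 2 else t - b

theorem measurable_quarterPointKernel (a b : ℝ) : Measurable (quarterPointKernel a b) :=
  (measurable_id.sub_const _).ite measurableSet_Iic
    ((measurable_id.sub_const _).ite measurableSet_Iic (measurable_id.sub_const _))

theorem integral_comp_quarterPointKernel {a b : ℝ} (hab : a ≤ b) (Φ : ℝ → ℝ → ℝ)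
    (h₁ : IntervalIntegrable (fun t => Φ (t - a) t) volume a ((3 * a + b) / 4))
    (h₂ : IntervalIntegrable (fun t => Φ (t - (a + b) / 2) t) volume
      ((3 * a + b) / 4) ((a + 3 * b) / 4))
    (h₃ : IntervalIntegrable (fun t => Φ (t - b) t) volume ((a + 3 * b) / 4) b) :
    IntervalIntegrable (fun t => Φ (quarterPointKernel a b t) t) volume a b ∧
      ∫ t in a..b, Φ (quarterPointKernel a b t) t =
        (∫ t in a..(3 * a + b) / 4, Φ (t - a) t) +
        (∫ t in (3 * a + b) / 4..(a + 3 * b) / 4, Φ (t - (a + b) / 2) t) +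
        ∫ t in (a + 3 * b) / 4..b, Φ (t - b) t := by
  have hap : a ≤ (3 * a + b) / 4 := by linarith
  have hpq : (3 * a + b) / 4 ≤ (a + 3 * b) / 4 := by linarith
  have hqb : (a + 3 * b) / 4 ≤ b := by linarith
  have e₁ : EqOn (fun t => Φ (t - a) t) (fun t => Φ (quarterPointKernel a b t) t)
      (Ioo a ((3 * a + b) / 4)) := fun t ht => by
    simp only [quarterPointKernel, if_pos ht.2.le]
  have e₂ : EqOn (fun t => Φ (t - (a + b) / 2) t) (fun t => Φ (quarterPointKernel a b t) t)
      (Ioo ((3 * a + b) / 4) ((a + 3 * b) / 4)) := fun t ht => by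
    simp only [quarterPointKernel, if_neg ht.1.not_ge, if_pos ht.2.le]
  have e₃ : EqOn (fun t => Φ (t - b) t) (fun t => Φ (quarterPointKernel a b t) t)
      (Ioo ((a + 3 * b) / 4) b) := fun t ht => by
    simp only [quarterPointKernel, if_neg (hpq.trans_lt ht.1).not_ge, if_neg ht.1.not_ge]
  have j₁ := h₁.congr_uIoo (uIoo_of_le hap ▸ e₁)
  have j₂ := h₂.congr_uIoo (uIoo_of_le hpq ▸ e₂)
  have j₃ := h₃.congr_uIoo (uIoo_of_le hqb ▸ e₃)
  refine ⟨(j₁.trans j₂).trans j₃, ?_⟩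
  rw [← intervalIntegral.integral_add_adjacent_intervals (j₁.trans j₂) j₃,
    ← intervalIntegral.integral_add_adjacent_intervals j₁ j₂,
    intervalIntegral.integral_congr_Ioo_of_le hap e₁,
    intervalIntegral.integral_congr_Ioo_of_le hpq e₂,
    intervalIntegral.integral_congr_Ioo_of_le hqb e₃]

theorem integral_quarterPointKernel_sq {a b : ℝ} (hab : a ≤ b) :
    IntervalIntegrable (fun t => quarterPointKernel a b t ^ 2) volume a b ∧
      ∫ t in a..b, quarterPointKernel a b t ^ 2 = (b - a) ^ 3 / 48 := by
  have hsq (c u v : ℝ) : IntervalIntegrable (fun t => (t - c) ^ 2) volume u v :=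
    (by fun_prop : Continuous fun t : ℝ => (t - c) ^ 2).intervalIntegrable u v
  obtain ⟨hint, heq⟩ :=
    integral_comp_quarterPointKernel hab (fun k _ => k ^ 2) (hsq _ _ _) (hsq _ _ _) (hsq _ _ _)
  refine ⟨hint, ?_⟩
  simp only [heq, intervalIntegral.integral_comp_sub_right (· ^ 2), integral_pow]
  ring

theorem integral_quarterPointKernel_mul {F g : ℝ → ℝ} {a b : ℝ} (hab : a ≤ b)
    (hg : IntervalIntegrable g volume a b) (hF : ∀ x ∈ Icc a b, F x - F a = ∫ t in a..x, g t) :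
    ∫ t in a..b, quarterPointKernel a b t * g t =
      (b - a) / 2 * (F ((3 * a + b) / 4) + F ((a + 3 * b) / 4)) - ∫ t in a..b, F t := by
  have hp : (3 * a + b) / 4 ∈ Icc a b := ⟨by linarith, by linarith⟩
  have hq : (a + 3 * b) / 4 ∈ Icc a b := ⟨by linarith, by linarith⟩
  have ha : a ∈ Icc a b := left_mem_Icc.2 hab
  have hb : b ∈ Icc a b := right_mem_Icc.2 hab
  have hF_int {u v : ℝ} (hu : u ∈ Icc a b) (hv : v ∈ Icc a b) :
      IntervalIntegrable F volume u v :=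
    ((continuousOn_of_sub_eq_integral hg hF).mono (uIcc_subset_Icc hu hv)).intervalIntegrable
  have hg_int {u v : ℝ} (hu : u ∈ Icc a b) (hv : v ∈ Icc a b) :
      IntervalIntegrable g volume u v :=
    hg.mono_set (uIcc_of_le hab ▸ uIcc_subset_Icc hu hv)
  have hlin_int {u v : ℝ} (c : ℝ) (hu : u ∈ Icc a b) (hv : v ∈ Icc a b) :
      IntervalIntegrable (fun t => (t - c) * g t) volume u v :=
    (hg_int hu hv).continuousOn_mul (by fun_prop)
  have hpiece {u v : ℝ} (c : ℝ) (hu : u ∈ Icc a b) (hv : v ∈ Icc a b) (huv : u ≤ v) :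
      ∫ t in u..v, (t - c) * g t = (v - c) * F v - (u - c) * F u - ∫ t in u..v, F t :=
    integral_sub_mul_eq_of_sub_eq_integral c huv (hg_int hu hv)
      fun x hx => sub_eq_integral_of_mem_Icc hg hF hu ⟨hu.1.trans hx.1, hx.2.trans hv.2⟩
  obtain ⟨-, hsplit⟩ := integral_comp_quarterPointKernel hab (fun k t => k * g t)
    (hlin_int _ ha hp) (hlin_int _ hp hq) (hlin_int _ hq hb)
  rw [hsplit, hpiece _ ha hp hp.1, hpiece _ hp hq (by linarith), hpiece _ hq hb hq.2,
    ← intervalIntegral.integral_add_adjacent_intervals (hF_int ha hq) (hF_int hq hb),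
    ← intervalIntegral.integral_add_adjacent_intervals (hF_int ha hp) (hF_int hp hq)]
  ring

theorem sqrt_pow_three_div_48 {x : ℝ} (hx : 0 ≤ x) : √(x ^ 3 / 48) = x * (√x / (4 * √3)) := by
  rw [show x ^ 3 / 48 = (x / (4 * √3)) ^ 2 * x by
      rw [div_pow, mul_pow, Real.sq_sqrt (by norm_num : (0:ℝ) ≤ 3)]; ring,
    Real.sqrt_mul (sq_nonneg _), Real.sqrt_sq (by positivity)]
  ring

theorem abs_quarterPoint_sub_average_le {F g : ℝ → ℝ} {a b : ℝ} (hab : a < b)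
    (hg : IntervalIntegrable g volume a b)
    (hg2 : IntervalIntegrable (fun t => g t ^ 2) volume a b)
    (hF : ∀ x ∈ Icc a b, F x - F a = ∫ t in a..x, g t) :
    |(F ((3 * a + b) / 4) + F ((a + 3 * b) / 4)) / 2 - 1 / (b - a) * ∫ t in a..b, F t|
      ≤ √(b - a) / (4 * √3) * √(∫ t in a..b, g t ^ 2) := by
  have hba : 0 < b - a := sub_pos.2 hab
  have hIoc {φ : ℝ → ℝ} (hφ : IntervalIntegrable φ volume a b) : IntegrableOn φ (Ioc a b) :=
    (intervalIntegrable_iff_integrableOn_Ioc_of_le hab.le).1 hφ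
  obtain ⟨hK2, hK2_eq⟩ := integral_quarterPointKernel_sq hab.le
  have hK : MemLp (quarterPointKernel a b) 2 (volume.restrict (Ioc a b)) :=
    (memLp_two_iff_integrable_sq (measurable_quarterPointKernel a b).aestronglyMeasurable).2
      (hIoc hK2)
  have hg' : MemLp g 2 (volume.restrict (Ioc a b)) :=
    (memLp_two_iff_integrable_sq (hIoc hg).aestronglyMeasurable).2 (hIoc hg2)
  have hcs := abs_integral_mul_le_sqrt_mul_sqrt hK hg'
  simp only [← intervalIntegral.integral_of_le hab.le, hK2_eq,
    integral_quarterPointKernel_mul hab.le hg hF, sqrt_pow_three_div_48 hba.le] at hcs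
  calc _ = |(b - a) / 2 * (F ((3 * a + b) / 4) + F ((a + 3 * b) / 4)) - ∫ t in a..b, F t|
        / (b - a) := by
          rw [← abs_of_pos hba, ← abs_div, abs_of_pos hba]
          congr 1
          field_simp
    _ ≤ _ := by
      rw [div_le_iff₀ hba]
      linarith

theorem companion_ostrowski_first_deriv_L2_trapezoid_type_general
    (a b : ℝ) (hab : a < b) (f f' : ℝ → ℝ)
    (hint : IntervalIntegrable f' MeasureTheory.volume a b)
    (hftc : ∀ x ∈ Set.Icc a b, f x - f a = ∫ t in a..x, f' t)
    (hL2 : IntervalIntegrable (fun t => (f' t) ^ 2) MeasureTheory.volume a b)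
    (σ : ℝ) (hσ : σ = (∫ t in a..b, (f' t) ^ 2) - (f b - f a) ^ 2 / (b - a)) :
    |(f ((3 * a + b) / 4) + f ((a + 3 * b) / 4)) / 2 - (1 / (b - a)) * ∫ t in a..b, f t|
      ≤ Real.sqrt (b - a) / (4 * Real.sqrt 3) * Real.sqrt σ := by
  obtain ⟨c, hc⟩ : ∃ c, c = (f b - f a) / (b - a) := ⟨_, rfl⟩
  have hf'_int : ∫ t in a..b, f' t = f b - f a := (hftc b ⟨hab.le, le_rfl⟩).symm
  have hσ_eq : σ = ∫ t in a..b, (f' t - c) ^ 2 := by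
    rw [hc, ← hf'_int, integral_sub_average_sq hint hL2, hσ, hf'_int]
  have hsq : IntervalIntegrable (fun t => (f' t - c) ^ 2) volume a b :=
    ((hL2.sub (hint.const_mul (2 * c))).add (intervalIntegrable_const (c := c ^ 2))).congr
      fun t _ => by ring
  have hf_int : IntervalIntegrable f volume a b :=
    (continuousOn_of_sub_eq_integral hint hftc).intervalIntegrable_of_Icc hab.le
  have hbound := abs_quarterPoint_sub_average_le hab (hint.sub intervalIntegrable_const) hsq
    (sub_mul_sub_eq_integral_sub_const hint hftc c)
  rw [intervalIntegral.integral_sub hf_int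
      ((by fun_prop : Continuous fun t : ℝ => c * t).intervalIntegrable a b),
    intervalIntegral.integral_const_mul, integral_id, ← hσ_eq] at hbound
  refine le_of_eq_of_le ?_ hbound
  congr 1
  field_simp [(sub_pos.2 hab).ne']
  ring

/-- **Trapezoid type inequality for `f' ∈ L²[a,b]`** (Corollary of Theorem 2.3, inequality
(2.34)): with `σ(f') = ∫_a^b f'(t)² dt - (f b - f a)²/(b - a)`,
`|(f((3a+b)/4) + f((a+3b)/4))/2 - (1/(b-a)) ∫_a^b f| ≤ (√(b-a)/(4√3)) √(σ(f'))`. -/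
theorem companion_ostrowski_first_deriv_L2_trapezoid_type
    (a b : ℝ) (hab : a < b) (f f' : ℝ → ℝ)
    (hcont : ContinuousOn f (Set.Icc a b))
    (hint : IntervalIntegrable f' MeasureTheory.volume a b)
    (hftc : ∀ x ∈ Set.Icc a b, f x - f a = ∫ t in a..x, f' t)
    (hL2 : IntervalIntegrable (fun t => (f' t) ^ 2) MeasureTheory.volume a b)
    (σ : ℝ) (hσ : σ = (∫ t in a..b, (f' t) ^ 2) - (f b - f a) ^ 2 / (b - a)) :
    |(f ((3 * a + b) / 4) + f ((a + 3 * b) / 4)) / 2 - (1 / (b - a)) * ∫ t in a..b, f t|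
      ≤ Real.sqrt (b - a) / (4 * Real.sqrt 3) * Real.sqrt σ :=
  companion_ostrowski_first_deriv_L2_trapezoid_type_general a b hab f f' hint hftc hL2 σ hσ
end

section
/- Let a < b be real numbers and let f : [a,b] → ℝ be absolutely continuous on [a,b] with f' ∈ L²[a,b]. Set σ(f') = ‖f'‖₂² − (f(b) − f(a))²/(b − a). Then |(f(a) + f(b))/2 − (1/(b−a)) ∫_a^b f(t) dt| ≤ ((b−a)^{1/2}/(2√3)) · √(σ(f')). -/
/-!
Integrating by parts against the kernel `t - (a + b) / 2` writes `(b - a)` times the trapezoid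
error as `∫ (t - (a + b) / 2) f'(t) dt`. The kernel has mean zero, so `f'` may be replaced by
`f' - (f b - f a) / (b - a)`, whose squared `L²` norm is `σ(f')`; Cauchy–Schwarz together with
`∫ (t - (a + b) / 2)² = (b - a)³ / 12` gives the bound.
-/

open MeasureTheory Set

theorem integral_mul_sq_le_sq_mul_sq {α : Type*} [MeasurableSpace α] {μ : Measure α}
    {g h : α → ℝ}
    (hg : Integrable (fun x => g x ^ 2) μ) (hh : Integrable (fun x => h x ^ 2) μ)
    (hgh : Integrable (fun x => g x * h x) μ) :
    (∫ x, g x * h x ∂μ) ^ 2 ≤ (∫ x, g x ^ 2 ∂μ) * ∫ x, h x ^ 2 ∂μ := by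
  have hquad (s : ℝ) : 0 ≤ (∫ x, g x ^ 2 ∂μ) * (s * s) + 2 * (∫ x, g x * h x ∂μ) * s
      + ∫ x, h x ^ 2 ∂μ :=
    calc (0 : ℝ) ≤ ∫ x, (s * g x + h x) ^ 2 ∂μ := integral_nonneg fun x => sq_nonneg _
      _ = ∫ x, (s * s) * g x ^ 2 + 2 * s * (g x * h x) + h x ^ 2 ∂μ := by
        congr 1; ext x; ring
      _ = _ := by
        rw [integral_add ((hg.const_mul _).fun_add (hgh.const_mul _)) hh,
          integral_add (hg.const_mul _) (hgh.const_mul _), integral_const_mul,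
          integral_const_mul]
        ring
  have := discrim_le_zero hquad
  rw [discrim] at this
  nlinarith

theorem IntervalIntegrable.integral_primitive_eq {φ : ℝ → ℝ} {a b : ℝ}
    (hφ : IntervalIntegrable φ volume a b) (c : ℝ) :
    ∫ x in a..b, (∫ t in a..x, φ t)
      = (∫ t in a..b, φ t) * (b - c) - ∫ x in a..b, (x - c) * φ x := by
  have hF := hφ.absolutelyContinuousOnInterval_intervalIntegral (c := a) left_mem_uIcc
  have hg : AbsolutelyContinuousOnInterval (fun x => x - c) a b :=
    (contDiff_id.sub contDiff_const).contDiffOn.absolutelyContinuousOnInterval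
  have hderiv : ∫ x in a..b, deriv (fun x => ∫ t in a..x, φ t) x * (x - c)
      = ∫ x in a..b, (x - c) * φ x := by
    refine intervalIntegral.integral_congr_ae ?_
    filter_upwards [hφ.ae_hasDerivAt_integral] with x hx hxab
    rw [(hx (uIoc_subset_uIcc hxab) a left_mem_uIcc).deriv, mul_comm]
  simpa [hderiv] using hF.integral_mul_deriv_eq_deriv_mul hg

theorem trapezoid_sub_integral_eq {f f' : ℝ → ℝ} {a b : ℝ} (hab : a ≤ b)
    (hf' : IntervalIntegrable f' volume a b)
    (hf : ∀ x ∈ Icc a b, f x - f a = ∫ t in a..x, f' t) :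
    (b - a) * ((f a + f b) / 2) - ∫ t in a..b, f t
      = ∫ t in a..b, (t - (a + b) / 2) * f' t := by
  have hprim : (∫ t in a..b, f t) = ∫ x in a..b, (f a + ∫ t in a..x, f' t) :=
    intervalIntegral.integral_congr fun x hx => by
      linarith [hf x (by rwa [uIcc_of_le hab] at hx)]
  rw [hprim, intervalIntegral.integral_add intervalIntegrable_const
    (intervalIntegral.continuousOn_primitive_interval' hf' left_mem_uIcc).intervalIntegrable,
    hf'.integral_primitive_eq ((a + b) / 2), intervalIntegral.integral_const, smul_eq_mul,
    ← hf b (right_mem_Icc.2 hab)]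
  ring

theorem sq_integral_mul_le_of_integral_eq_zero {g φ : ℝ → ℝ} {a b : ℝ} (hab : a < b)
    (hg : ContinuousOn g (uIcc a b)) (hg₀ : ∫ t in a..b, g t = 0)
    (hφ : IntervalIntegrable φ volume a b)
    (hφ₂ : IntervalIntegrable (fun t => φ t ^ 2) volume a b) :
    (∫ t in a..b, g t * φ t) ^ 2
      ≤ (∫ t in a..b, g t ^ 2)
        * ((∫ t in a..b, φ t ^ 2) - (∫ t in a..b, φ t) ^ 2 / (b - a)) := by
  set c := (∫ t in a..b, φ t) / (b - a) with hc
  have hψ : IntervalIntegrable (fun t => φ t - c) volume a b := hφ.sub intervalIntegrable_const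
  have hexpand : (fun t => (φ t - c) ^ 2) = fun t => φ t ^ 2 - 2 * c * φ t + c ^ 2 := by
    ext t; ring
  have hψ₂ : IntervalIntegrable (fun t => (φ t - c) ^ 2) volume a b := by
    rw [hexpand]
    exact (hφ₂.sub (hφ.const_mul _)).add intervalIntegrable_const
  have hcenter : ∫ t in a..b, g t * φ t = ∫ t in a..b, g t * (φ t - c) := by
    simp only [mul_sub]
    rw [intervalIntegral.integral_sub (hφ.continuousOn_mul hg) (hg.intervalIntegrable.mul_const c),
      intervalIntegral.integral_mul_const, hg₀, zero_mul, sub_zero]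
  have hvar : ∫ t in a..b, (φ t - c) ^ 2
      = (∫ t in a..b, φ t ^ 2) - (∫ t in a..b, φ t) ^ 2 / (b - a) := by
    rw [hexpand,
      intervalIntegral.integral_add (hφ₂.sub (hφ.const_mul _)) intervalIntegrable_const,
      intervalIntegral.integral_sub hφ₂ (hφ.const_mul _), intervalIntegral.integral_const_mul,
      intervalIntegral.integral_const, smul_eq_mul, hc]
    field_simp [(sub_pos.2 hab).ne']
    ring
  rw [hcenter, ← hvar]
  have hcs := integral_mul_sq_le_sq_mul_sq (μ := volume.restrict (Ioc a b))
    (hg.pow 2).intervalIntegrable.1 hψ₂.1 (hψ.continuousOn_mul hg).1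
  simpa only [intervalIntegral.integral_of_le hab.le] using hcs

theorem companion_ostrowski_first_deriv_L2_trapezoid_general
    (a b : ℝ) (hab : a < b) (f f' : ℝ → ℝ)
    (hint : IntervalIntegrable f' MeasureTheory.volume a b)
    (hftc : ∀ x ∈ Set.Icc a b, f x - f a = ∫ t in a..x, f' t)
    (hL2 : IntervalIntegrable (fun t => (f' t) ^ 2) MeasureTheory.volume a b)
    (σ : ℝ) (hσ : σ = (∫ t in a..b, (f' t) ^ 2) - (f b - f a) ^ 2 / (b - a)) :
    |(f a + f b) / 2 - (1 / (b - a)) * ∫ t in a..b, f t|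
      ≤ Real.sqrt (b - a) / (2 * Real.sqrt 3) * Real.sqrt σ := by
  have hba : 0 < b - a := sub_pos.2 hab
  set m := (a + b) / 2
  have hmean : ∫ t in a..b, (t - m) = 0 := by
    simp only [intervalIntegral.integral_comp_sub_right fun t => t, integral_id, m]
    ring
  have hsq : ∫ t in a..b, (t - m) ^ 2 = (b - a) ^ 3 / 12 := by
    simp only [intervalIntegral.integral_comp_sub_right fun t => t ^ 2, integral_pow, m]
    ring
  have hcs := sq_integral_mul_le_of_integral_eq_zero (g := fun t => t - m) hab
    (by fun_prop) hmean hint hL2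
  rw [hsq, ← hftc b (right_mem_Icc.2 hab.le), ← hσ] at hcs
  have hσ₀ : 0 ≤ σ := nonneg_of_mul_nonneg_right ((sq_nonneg _).trans hcs) (by positivity)
  have herror : (f a + f b) / 2 - (1 / (b - a)) * ∫ t in a..b, f t
      = (∫ t in a..b, (t - m) * f' t) / (b - a) := by
    rw [← trapezoid_sub_integral_eq hab.le hint hftc]
    field_simp
  rw [herror, abs_div, abs_of_pos hba, div_le_iff₀ hba]
  refine abs_le_of_sq_le_sq ?_ (by positivity)
  calc _ ≤ (b - a) ^ 3 / 12 * σ := hcs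
    _ = _ := by
      rw [mul_pow, mul_pow, div_pow, mul_pow, Real.sq_sqrt hba.le, Real.sq_sqrt zero_le_three,
        Real.sq_sqrt hσ₀]
      ring

/-- **Sharp trapezoid inequality for `f' ∈ L²[a,b]`** (Corollary of Theorem 2.3, inequality
(2.35)): with `σ(f') = ∫_a^b f'(t)² dt - (f b - f a)²/(b - a)`,
`|(f a + f b)/2 - (1/(b-a)) ∫_a^b f| ≤ (√(b-a)/(2√3)) √(σ(f'))`. -/
theorem companion_ostrowski_first_deriv_L2_trapezoid
    (a b : ℝ) (hab : a < b) (f f' : ℝ → ℝ)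
    (hcont : ContinuousOn f (Set.Icc a b))
    (hint : IntervalIntegrable f' MeasureTheory.volume a b)
    (hftc : ∀ x ∈ Set.Icc a b, f x - f a = ∫ t in a..x, f' t)
    (hL2 : IntervalIntegrable (fun t => (f' t) ^ 2) MeasureTheory.volume a b)
    (σ : ℝ) (hσ : σ = (∫ t in a..b, (f' t) ^ 2) - (f b - f a) ^ 2 / (b - a)) :
    |(f a + f b) / 2 - (1 / (b - a)) * ∫ t in a..b, f t|
      ≤ Real.sqrt (b - a) / (2 * Real.sqrt 3) * Real.sqrt σ :=
  companion_ostrowski_first_deriv_L2_trapezoid_general a b hab f f' hint hftc hL2 σ hσ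
end

section
/- Let a < b be real numbers and let f : [a,b] → ℝ be absolutely continuous on [a,b] with f' ∈ L²[a,b]. Set σ(f') = ‖f'‖₂² − (f(b) − f(a))²/(b − a). Then |f((a+b)/2) − (1/(b−a)) ∫_a^b f(t) dt| ≤ ((b−a)^{1/2}/(2√3)) · √(σ(f')). -/
/-!
Let `K` be the Peano kernel of the midpoint rule: `K t = t - a` left of the midpoint and
`K t = t - b` right of it. Integrating by parts on each half,
`∫ K f' = (b - a) f((a + b)/2) - ∫ f`. Since `∫ K = 0`, `f'` may be replaced by
`f' - (f b - f a)/(b - a)`, whose squared `L²` norm is `σ(f')`, and Cauchy–Schwarz with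
`∫ K² = (b - a)³/12` gives the bound.
-/

open MeasureTheory Set intervalIntegral

theorem sq_integral_mul_le_integral_sq_mul_integral_sq {α : Type*} [MeasurableSpace α]
    {μ : Measure α} {f g : α → ℝ} (hf : MemLp f 2 μ) (hg : MemLp g 2 μ) :
    (∫ x, f x * g x ∂μ) ^ 2 ≤ (∫ x, f x ^ 2 ∂μ) * ∫ x, g x ^ 2 ∂μ := by
  have inner_toLp {u w : α → ℝ} (hu : MemLp u 2 μ) (hw : MemLp w 2 μ) :
      inner ℝ (hu.toLp u) (hw.toLp w) = ∫ x, u x * w x ∂μ := by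
    rw [L2.inner_def]
    refine integral_congr_ae ?_
    filter_upwards [hu.coeFn_toLp, hw.coeFn_toLp] with x hux hwx
    simp [hux, hwx, mul_comm]
  simpa only [inner_toLp, sq] using real_inner_mul_inner_self_le (hf.toLp f) (hg.toLp g)

theorem intervalIntegral.integral_sub_const_sq {g : ℝ → ℝ} {a b : ℝ}
    (hg : IntervalIntegrable g volume a b) (hg2 : IntervalIntegrable (fun t => g t ^ 2) volume a b)
    (c : ℝ) :
    ∫ t in a..b, (g t - c) ^ 2
      = (∫ t in a..b, g t ^ 2) - 2 * c * (∫ t in a..b, g t) + (b - a) * c ^ 2 := by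
  have hexpand : ∫ t in a..b, (g t - c) ^ 2 = ∫ t in a..b, (g t ^ 2 - 2 * c * g t + c ^ 2) :=
    integral_congr fun t _ => by ring
  rw [hexpand, integral_add (hg2.sub (hg.const_mul _)) intervalIntegrable_const,
    integral_sub hg2 (hg.const_mul _), integral_const_mul, intervalIntegral.integral_const,
    smul_eq_mul]

theorem sqrt_div_two_mul_sqrt_three_mul_sqrt {x : ℝ} (hx : 0 ≤ x) (y : ℝ) :
    √x / (2 * √3) * √y = √(x / 12 * y) := by
  have h12 : √12 = 2 * √3 := by
    rw [show (12 : ℝ) = 2 ^ 2 * 3 by norm_num, Real.sqrt_mul (by positivity),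
      Real.sqrt_sq zero_le_two]
  rw [Real.sqrt_mul (by positivity), Real.sqrt_div hx, h12]

section Piecewise

variable {E : Type*} {g₁ g₂ : ℝ → E} {a m b : ℝ}

theorem eqOn_ite_le_left (ham : a ≤ m) :
    EqOn (fun t => if t ≤ m then g₁ t else g₂ t) g₁ (uIoc a m) := fun t ht => by
  rw [uIoc_of_le ham] at ht
  simp [ht.2]

theorem eqOn_ite_le_right (hmb : m ≤ b) :
    EqOn (fun t => if t ≤ m then g₁ t else g₂ t) g₂ (uIoc m b) := fun t ht => by
  rw [uIoc_of_le hmb] at ht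
  simp [not_le.2 ht.1]

theorem IntervalIntegrable.ite_le [NormedAddCommGroup E] (ham : a ≤ m) (hmb : m ≤ b)
    (h₁ : IntervalIntegrable g₁ volume a m) (h₂ : IntervalIntegrable g₂ volume m b) :
    IntervalIntegrable (fun t => if t ≤ m then g₁ t else g₂ t) volume a b :=
  (h₁.congr (eqOn_ite_le_left ham).symm).trans (h₂.congr (eqOn_ite_le_right hmb).symm)

theorem intervalIntegral.integral_ite_le [NormedAddCommGroup E] [NormedSpace ℝ E]
    (ham : a ≤ m) (hmb : m ≤ b)
    (h₁ : IntervalIntegrable g₁ volume a m) (h₂ : IntervalIntegrable g₂ volume m b) :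
    ∫ t in a..b, (if t ≤ m then g₁ t else g₂ t) = (∫ t in a..m, g₁ t) + ∫ t in m..b, g₂ t := by
  rw [← integral_add_adjacent_intervals (h₁.congr (eqOn_ite_le_left ham).symm)
      (h₂.congr (eqOn_ite_le_right hmb).symm),
    integral_congr_ae (ae_of_all _ (eqOn_ite_le_left ham)),
    integral_congr_ae (ae_of_all _ (eqOn_ite_le_right hmb))]

end Piecewise

theorem integral_sub_mul_eq_of_forall_sub_eq_integral {f f' : ℝ → ℝ} {a b c d : ℝ} (p : ℝ)
    (hac : a ≤ c) (hcd : c ≤ d) (hdb : d ≤ b) (hf' : IntervalIntegrable f' volume a b)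
    (hf : ∀ x ∈ Icc a b, f x - f a = ∫ t in a..x, f' t) :
    ∫ x in c..d, (x - p) * f' x = (d - p) * f d - (c - p) * f c - ∫ x in c..d, f x := by
  set F : ℝ → ℝ := fun x => ∫ t in a..x, f' t
  have hcd_Icc : uIcc c d ⊆ Icc a b := by
    rw [uIcc_of_le hcd]
    exact Icc_subset_Icc hac hdb
  have hF : AbsolutelyContinuousOnInterval F c d :=
    (hf'.absolutelyContinuousOnInterval_intervalIntegral left_mem_uIcc).mono
      (hcd_Icc.trans Icc_subset_uIcc)
  have hlin : AbsolutelyContinuousOnInterval (fun x => x - p) c d :=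
    (contDiff_id.sub contDiff_const).contDiffOn.absolutelyContinuousOnInterval
  have hderiv : ∫ x in c..d, (x - p) * deriv F x = ∫ x in c..d, (x - p) * f' x := by
    refine integral_congr_ae ?_
    filter_upwards [hf'.ae_hasDerivAt_integral] with x hx hxcd
    rw [(hx (Icc_subset_uIcc (hcd_Icc (uIoc_subset_uIcc hxcd))) a left_mem_uIcc).deriv]
  have hfF : EqOn f (fun x => f a + F x) (uIcc c d) := fun x hx => by
    have := hf x (hcd_Icc hx)
    simp only [F]
    linarith
  have hintF : ∫ x in c..d, f x = (d - c) * f a + ∫ x in c..d, F x := by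
    rw [integral_congr hfF, integral_add intervalIntegrable_const
      hF.continuousOn.intervalIntegrable, intervalIntegral.integral_const, smul_eq_mul]
  rw [← hderiv, hlin.integral_mul_deriv_eq_deriv_mul hF, hintF, hfF right_mem_uIcc,
    hfF left_mem_uIcc]
  simp only [deriv_sub_const, deriv_id'', one_mul]
  ring

theorem continuousOn_Icc_of_forall_sub_eq_integral {f f' : ℝ → ℝ} {a b : ℝ} (hab : a ≤ b)
    (hf' : IntervalIntegrable f' volume a b)
    (hf : ∀ x ∈ Icc a b, f x - f a = ∫ t in a..x, f' t) :
    ContinuousOn f (Icc a b) := by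
  have hF := (hf'.absolutelyContinuousOnInterval_intervalIntegral left_mem_uIcc).continuousOn
  rw [uIcc_of_le hab] at hF
  refine ((continuousOn_const (c := f a)).add hF).congr fun x hx => ?_
  show f x = f a + ∫ t in a..x, f' t
  linarith [hf x hx]

section MidpointKernel

noncomputable def midpointKernel (a b t : ℝ) : ℝ := if t ≤ (a + b) / 2 then t - a else t - b

variable {a b : ℝ}

theorem add_div_two_mem_Icc (hab : a ≤ b) : (a + b) / 2 ∈ Icc a b :=
  ⟨by linarith, by linarith⟩

theorem measurable_midpointKernel : Measurable (midpointKernel a b) :=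
  Measurable.ite measurableSet_Iic (by fun_prop) (by fun_prop)

theorem intervalIntegrable_midpointKernel_mul (hab : a ≤ b) {g : ℝ → ℝ}
    (hg : IntervalIntegrable g volume a b) :
    IntervalIntegrable (fun t => midpointKernel a b t * g t) volume a b := by
  have hm := Icc_subset_uIcc (add_div_two_mem_Icc hab)
  simp only [midpointKernel, ite_mul]
  exact IntervalIntegrable.ite_le (add_div_two_mem_Icc hab).1 (add_div_two_mem_Icc hab).2
    ((hg.mono_set (uIcc_subset_uIcc_left hm)).continuousOn_mul (by fun_prop))
    ((hg.mono_set (uIcc_subset_uIcc_right hm)).continuousOn_mul (by fun_prop))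

theorem integral_midpointKernel_mul (hab : a ≤ b) {g : ℝ → ℝ}
    (hg : IntervalIntegrable g volume a b) :
    ∫ t in a..b, midpointKernel a b t * g t =
      (∫ t in a..(a + b) / 2, (t - a) * g t) + ∫ t in (a + b) / 2..b, (t - b) * g t := by
  have hm := Icc_subset_uIcc (add_div_two_mem_Icc hab)
  simp only [midpointKernel, ite_mul]
  exact intervalIntegral.integral_ite_le (add_div_two_mem_Icc hab).1 (add_div_two_mem_Icc hab).2
    ((hg.mono_set (uIcc_subset_uIcc_left hm)).continuousOn_mul (by fun_prop))
    ((hg.mono_set (uIcc_subset_uIcc_right hm)).continuousOn_mul (by fun_prop))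

theorem integral_midpointKernel (hab : a ≤ b) : ∫ t in a..b, midpointKernel a b t = 0 := by
  have h := integral_midpointKernel_mul hab (intervalIntegrable_const (c := (1 : ℝ)))
  simp only [mul_one] at h
  rw [h, integral_comp_sub_right (fun x => x), integral_comp_sub_right (fun x => x), integral_id,
    integral_id]
  ring

theorem intervalIntegrable_midpointKernel_sq (hab : a ≤ b) :
    IntervalIntegrable (fun t => midpointKernel a b t ^ 2) volume a b := by
  simp only [midpointKernel, ite_pow]
  exact IntervalIntegrable.ite_le (add_div_two_mem_Icc hab).1 (add_div_two_mem_Icc hab).2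
    ((by fun_prop : Continuous _).intervalIntegrable _ _)
    ((by fun_prop : Continuous _).intervalIntegrable _ _)

theorem integral_midpointKernel_sq (hab : a ≤ b) :
    ∫ t in a..b, midpointKernel a b t ^ 2 = (b - a) ^ 3 / 12 := by
  simp only [midpointKernel, ite_pow]
  rw [intervalIntegral.integral_ite_le (add_div_two_mem_Icc hab).1 (add_div_two_mem_Icc hab).2
    ((by fun_prop : Continuous _).intervalIntegrable _ _)
    ((by fun_prop : Continuous _).intervalIntegrable _ _)]
  rw [integral_comp_sub_right (fun x => x ^ 2), integral_comp_sub_right (fun x => x ^ 2),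
    integral_pow, integral_pow]
  ring

theorem integral_midpointKernel_mul_eq_of_forall_sub_eq_integral {f f' : ℝ → ℝ} (hab : a ≤ b)
    (hf' : IntervalIntegrable f' volume a b)
    (hf : ∀ x ∈ Icc a b, f x - f a = ∫ t in a..x, f' t) :
    ∫ t in a..b, midpointKernel a b t * f' t = (b - a) * f ((a + b) / 2) - ∫ t in a..b, f t := by
  obtain ⟨ham, hmb⟩ := add_div_two_mem_Icc hab
  have hfi : IntervalIntegrable f volume a b :=
    (continuousOn_Icc_of_forall_sub_eq_integral hab hf' hf).intervalIntegrable_of_Icc hab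
  have hm := Icc_subset_uIcc (add_div_two_mem_Icc hab)
  rw [integral_midpointKernel_mul hab hf',
    integral_sub_mul_eq_of_forall_sub_eq_integral a le_rfl ham hmb hf' hf,
    integral_sub_mul_eq_of_forall_sub_eq_integral b ham hmb le_rfl hf' hf,
    ← integral_add_adjacent_intervals (hfi.mono_set (uIcc_subset_uIcc_left hm))
      (hfi.mono_set (uIcc_subset_uIcc_right hm))]
  ring

end MidpointKernel

theorem companion_ostrowski_first_deriv_L2_midpoint_general
    (a b : ℝ) (hab : a < b) (f f' : ℝ → ℝ)
    (hint : IntervalIntegrable f' MeasureTheory.volume a b)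
    (hftc : ∀ x ∈ Set.Icc a b, f x - f a = ∫ t in a..x, f' t)
    (hL2 : IntervalIntegrable (fun t => (f' t) ^ 2) MeasureTheory.volume a b)
    (σ : ℝ) (hσ : σ = (∫ t in a..b, (f' t) ^ 2) - (f b - f a) ^ 2 / (b - a)) :
    |f ((a + b) / 2) - (1 / (b - a)) * ∫ t in a..b, f t|
      ≤ Real.sqrt (b - a) / (2 * Real.sqrt 3) * Real.sqrt σ := by
  have hba : 0 < b - a := sub_pos.2 hab
  set c := (f b - f a) / (b - a)
  have hK : MemLp (midpointKernel a b) 2 (volume.restrict (Ioc a b)) :=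
    (memLp_two_iff_integrable_sq measurable_midpointKernel.aestronglyMeasurable).2
      (intervalIntegrable_midpointKernel_sq hab.le).1
  have hv : MemLp (fun t => f' t - c) 2 (volume.restrict (Ioc a b)) :=
    ((memLp_two_iff_integrable_sq hint.1.aestronglyMeasurable).2 hL2.1).sub (memLp_const c)
  have hKv : ∫ t in a..b, midpointKernel a b t * (f' t - c)
      = (b - a) * (f ((a + b) / 2) - 1 / (b - a) * ∫ t in a..b, f t) := by
    simp only [mul_sub]
    rw [integral_sub (intervalIntegrable_midpointKernel_mul hab.le hint)
        (intervalIntegrable_midpointKernel_mul hab.le intervalIntegrable_const),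
      intervalIntegral.integral_mul_const, integral_midpointKernel hab.le,
      integral_midpointKernel_mul_eq_of_forall_sub_eq_integral hab.le hint hftc]
    field_simp
    ring
  have hv2 : ∫ t in a..b, (f' t - c) ^ 2 = σ := by
    rw [integral_sub_const_sq hint hL2, ← hftc b (right_mem_Icc.2 hab.le), hσ]
    simp only [c]
    field_simp
    ring
  have hcs := sq_integral_mul_le_integral_sq_mul_integral_sq hK hv
  simp only [← intervalIntegral.integral_of_le hab.le] at hcs
  rw [hKv, integral_midpointKernel_sq hab.le, hv2] at hcs
  rw [sqrt_div_two_mul_sqrt_three_mul_sqrt hba.le]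
  refine Real.abs_le_sqrt (le_of_mul_le_mul_left ?_ (pow_pos hba 2))
  linear_combination hcs

/-- **Sharp midpoint inequality for `f' ∈ L²[a,b]`** (Corollary of Theorem 2.3, inequality
(2.36)): with `σ(f') = ∫_a^b f'(t)² dt - (f b - f a)²/(b - a)`,
`|f((a+b)/2) - (1/(b-a)) ∫_a^b f| ≤ (√(b-a)/(2√3)) √(σ(f'))`. -/
theorem companion_ostrowski_first_deriv_L2_midpoint
    (a b : ℝ) (hab : a < b) (f f' : ℝ → ℝ)
    (hcont : ContinuousOn f (Set.Icc a b))
    (hint : IntervalIntegrable f' MeasureTheory.volume a b)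
    (hftc : ∀ x ∈ Set.Icc a b, f x - f a = ∫ t in a..x, f' t)
    (hL2 : IntervalIntegrable (fun t => (f' t) ^ 2) MeasureTheory.volume a b)
    (σ : ℝ) (hσ : σ = (∫ t in a..b, (f' t) ^ 2) - (f b - f a) ^ 2 / (b - a)) :
    |f ((a + b) / 2) - (1 / (b - a)) * ∫ t in a..b, f t|
      ≤ Real.sqrt (b - a) / (2 * Real.sqrt 3) * Real.sqrt σ :=
  companion_ostrowski_first_deriv_L2_midpoint_general a b hab f f' hint hftc hL2 σ hσ
end
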